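/- arXiv:1411.1461 — 8 statements merged into one kernel-verified Lean document; each statement's English description precedes it below -/
import Mathlib

section
/- For every R ∈ (0, π) there exists K = K(R) ∈ ℝ such that on the 2-sphere S², for any point x, the squared distance function d(x,·)² is K-convex along every minimal geodesic contained in the open ball B(x,R): for a minimal geodesic γ : [0,1] → B(x,R), d(x,γ(t))² ≤ (1−t) d(x,γ(0))² + t d(x,γ(1))² − (K/2)(1−t)t d(γ(0),γ(1))². -/
/-- The intrinsic (geodesic) distance on the unit sphere `S² ⊆ ℝ³`. -/
noncomputable def sphDist (p q : Metric.sphere (0 : EuclideanSpace ℝ (Fin 3)) 1) : ℝ :=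
  Real.arccos (inner ℝ (p : EuclideanSpace ℝ (Fin 3)) (q : EuclideanSpace ℝ (Fin 3)) : ℝ)

/-- A minimal geodesic of `S²` (parametrized by `[0,1]`, constant speed) with respect to the
intrinsic distance. -/
def IsSphGeodesic (γ : ℝ → Metric.sphere (0 : EuclideanSpace ℝ (Fin 3)) 1) : Prop :=
  ∀ s ∈ Set.Icc (0:ℝ) 1, ∀ t ∈ Set.Icc (0:ℝ) 1,
    sphDist (γ s) (γ t) = |s - t| * sphDist (γ 0) (γ 1)

/-!
A minimal geodesic is a great-circle arc `γ u = cos (u L) • γ 0 + sin (u L) • w`, so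
`θ u = d(x, γ u) = arccos (a cos (u L) + b sin (u L))`. Away from `x`, `θ'' = cot θ (L² - θ'²)`,
hence `(θ²)'' = 2 θ'² (1 - θ cot θ) + 2 L² θ cot θ ≥ 2 L² R cot R`, because `θ cot θ ≤ 1` and
`θ ↦ θ cot θ` decreases on `(0, π)`. So `K = 2 R cot R` works. If `x` lies on `γ`, `θ` is
`L |u - s|` and the convexity defect is exactly `t (1 - t) L²`.
-/

open Real Set
open scoped RealInnerProductSpace

local notation "ℝ³" => EuclideanSpace ℝ (Fin 3)

namespace Real

lemma mul_cos_le_sin {x : ℝ} (h0 : 0 ≤ x) (hπ : x ≤ π) : x * cos x ≤ sin x := by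
  rcases le_or_gt (cos x) 0 with hcos | hcos
  · nlinarith [sin_nonneg_of_nonneg_of_le_pi h0 hπ]
  rcases h0.eq_or_lt with rfl | hpos
  · simp
  have hx : x < π / 2 := by
    by_contra! hx
    linarith [cos_nonpos_of_pi_div_two_le_of_le hx (by linarith [pi_pos])]
  have := lt_tan hpos hx
  rw [tan_eq_sin_div_cos, lt_div_iff₀ hcos] at this
  exact this.le

lemma antitoneOn_mul_cos_div_sin : AntitoneOn (fun x => x * cos x / sin x) (Ioo 0 π) := by
  have hsin : ∀ x ∈ Ioo 0 π, 0 < sin x := fun x hx => sin_pos_of_pos_of_lt_pi hx.1 hx.2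
  have hderiv : ∀ x ∈ Ioo 0 π, HasDerivAt (fun x => x * cos x / sin x)
      ((sin x * cos x - x) / sin x ^ 2) x := by
    intro x hx
    refine (((hasDerivAt_id' x).mul (hasDerivAt_cos x)).div (hasDerivAt_sin x)
      (hsin x hx).ne').congr_deriv ?_
    simp only [Pi.mul_apply]
    congr 1
    linear_combination -x * sin_sq_add_cos_sq x
  refine antitoneOn_of_hasDerivWithinAt_nonpos (convex_Ioo 0 π) ?_
    (fun x hx => (hderiv x (interior_subset hx)).hasDerivWithinAt) fun x hx => ?_
  · exact fun x hx => (hderiv x hx).continuousAt.continuousWithinAt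
  · rw [interior_Ioo] at hx
    have h2x := sin_lt (by linarith [hx.1] : 0 < 2 * x)
    rw [sin_two_mul] at h2x
    exact div_nonpos_of_nonpos_of_nonneg (by linarith) (sq_nonneg _)

end Real

section ArccosComp

variable {g g' : ℝ → ℝ} {L u : ℝ}

lemma hasDerivAt_arccos_comp (hg : HasDerivAt g (g' u) u) (h0 : 0 < arccos (g u))
    (hπ : arccos (g u) < π) :
    HasDerivAt (fun v => arccos (g v)) (-g' u / sin (arccos (g u))) u := by
  have harccos := hasDerivAt_arccos (arccos_lt_pi.mp hπ).ne' (arccos_pos.mp h0).ne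
  refine (harccos.comp u hg).congr_deriv ?_
  rw [sin_arccos]
  ring

/-- The Jacobi equation `θ'' = cot θ (L² - θ'²)` for `θ = arccos ∘ g`, where `g'' = -L² g`. -/
lemma hasDerivAt_deriv_arccos_comp (hg : HasDerivAt g (g' u) u)
    (hg' : HasDerivAt g' (-L ^ 2 * g u) u) (h0 : 0 < arccos (g u)) (hπ : arccos (g u) < π) :
    HasDerivAt (fun v => -g' v / sin (arccos (g v)))
      (cos (arccos (g u)) / sin (arccos (g u)) *
        (L ^ 2 - (-g' u / sin (arccos (g u))) ^ 2)) u := by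
  have hsin : sin (arccos (g u)) ≠ 0 := (sin_pos_of_pos_of_lt_pi h0 hπ).ne'
  refine (hg'.neg.div (hasDerivAt_arccos_comp hg h0 hπ).sin hsin).congr_deriv ?_
  rw [cos_arccos (arccos_lt_pi.mp hπ).le (arccos_pos.mp h0).le, Pi.neg_apply]
  field_simp

lemma convexOn_arccos_sq_sub {D : Set ℝ} (hD : Convex ℝ D) {R : ℝ} (hRπ : R < π)
    (hg : ∀ v, HasDerivAt g (g' v) v) (hg' : ∀ v, HasDerivAt g' (-L ^ 2 * g v) v)
    (hθ : ∀ v ∈ interior D, 0 < arccos (g v) ∧ arccos (g v) ≤ R) :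
    ConvexOn ℝ D (fun v => arccos (g v) ^ 2 - R * cos R / sin R * L ^ 2 * v ^ 2) := by
  set c := R * cos R / sin R
  set θ := fun v => arccos (g v)
  set θ' := fun v => -g' v / sin (θ v)
  have hθπ : ∀ v ∈ interior D, θ v < π := fun v hv => (hθ v hv).2.trans_lt hRπ
  have hθ_deriv : ∀ v ∈ interior D, HasDerivAt θ (θ' v) v := fun v hv =>
    hasDerivAt_arccos_comp (hg v) (hθ v hv).1 (hθπ v hv)
  have hθ'_deriv : ∀ v ∈ interior D,
      HasDerivAt θ' (cos (θ v) / sin (θ v) * (L ^ 2 - θ' v ^ 2)) v := fun v hv =>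
    hasDerivAt_deriv_arccos_comp (hg v) (hg' v) (hθ v hv).1 (hθπ v hv)
  have hg_cont : Continuous g := continuous_iff_continuousAt.mpr fun v => (hg v).continuousAt
  refine convexOn_of_hasDerivWithinAt2_nonneg hD
    (f' := fun v => 2 * (θ v * θ' v) - c * L ^ 2 * (2 * v))
    (f'' := fun v => 2 * (θ' v * θ' v + θ v * (cos (θ v) / sin (θ v) * (L ^ 2 - θ' v ^ 2)))
      - c * L ^ 2 * 2)
    ((continuous_arccos.comp hg_cont).pow 2 |>.sub (by fun_prop)).continuousOn
    (fun v hv => ?_) (fun v hv => ?_) (fun v hv => ?_)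
  · refine ((((hθ_deriv v hv).pow 2).sub ((hasDerivAt_pow 2 v).const_mul (c * L ^ 2))).congr_deriv
      ?_).hasDerivWithinAt
    ring
  · refine ((((hθ_deriv v hv).mul (hθ'_deriv v hv)).const_mul 2).sub
      (((hasDerivAt_id' v).const_mul 2).const_mul (c * L ^ 2))).congr_deriv ?_ |>.hasDerivWithinAt
    ring
  · obtain ⟨h0, hR⟩ := hθ v hv
    have hsin : 0 < sin (θ v) := sin_pos_of_pos_of_lt_pi h0 (hθπ v hv)
    have hle : θ v * cos (θ v) / sin (θ v) ≤ 1 :=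
      (div_le_one hsin).mpr (mul_cos_le_sin h0.le (hθπ v hv).le)
    have hge : c ≤ θ v * cos (θ v) / sin (θ v) :=
      antitoneOn_mul_cos_div_sin ⟨h0, hθπ v hv⟩ ⟨h0.trans_le hR, hRπ⟩ hR
    calc 0 ≤ 2 * θ' v ^ 2 * (1 - θ v * cos (θ v) / sin (θ v))
          + 2 * L ^ 2 * (θ v * cos (θ v) / sin (θ v) - c) := by
          have := sub_nonneg.mpr hle; have := sub_nonneg.mpr hge; positivity
      _ = _ := by ring

end ArccosComp

lemma ConvexOn.le_sub_mul_of_sub_mul_sq {f : ℝ → ℝ} {c t : ℝ}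
    (hf : ConvexOn ℝ (Icc 0 1) fun u => f u - c * u ^ 2) (ht : t ∈ Icc (0 : ℝ) 1) :
    f t ≤ (1 - t) * f 0 + t * f 1 - c * (1 - t) * t := by
  have h := hf.2 (left_mem_Icc.2 zero_le_one) (right_mem_Icc.2 zero_le_one) (sub_nonneg.2 ht.2)
    ht.1 (by ring)
  simp only [smul_eq_mul, mul_zero, mul_one, zero_add] at h
  linarith

lemma hasDerivAt_mul_cos_add_mul_sin (a b L u : ℝ) :
    HasDerivAt (fun v => a * cos (v * L) + b * sin (v * L))
      (L * b * cos (u * L) + -(L * a) * sin (u * L)) u := by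
  have hlin : HasDerivAt (fun v => v * L) L u := by simpa using (hasDerivAt_id u).mul_const L
  refine ((hlin.cos.const_mul a).add (hlin.sin.const_mul b)).congr_deriv ?_
  ring

lemma eq_inner_smul_add_inner_smul {E : Type*} [NormedAddCommGroup E] [InnerProductSpace ℝ E]
    {e₁ e₂ v : E} (he₁ : ‖e₁‖ = 1) (he₂ : ‖e₂‖ = 1) (h₁₂ : ⟪e₁, e₂⟫ = 0)
    (hv : ‖v‖ ^ 2 = ⟪e₁, v⟫ ^ 2 + ⟪e₂, v⟫ ^ 2) :
    v = ⟪e₁, v⟫ • e₁ + ⟪e₂, v⟫ • e₂ := by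
  rw [← sub_eq_zero, ← inner_self_eq_zero (𝕜 := ℝ)]
  simp only [inner_sub_left, inner_sub_right, inner_add_left, inner_add_right,
    real_inner_smul_left, real_inner_smul_right, real_inner_comm e₁ e₂, real_inner_comm e₁ v,
    real_inner_comm e₂ v, h₁₂]
  rw [real_inner_self_eq_norm_sq, real_inner_self_eq_norm_sq e₁, real_inner_self_eq_norm_sq e₂,
    he₁, he₂]
  linear_combination hv

local notation "𝕊²" => Metric.sphere (0 : ℝ³) 1

lemma cos_sphDist (p q : 𝕊²) : cos (sphDist p q) = ⟪(p : ℝ³), q⟫ :=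
  cos_arccos (neg_one_le_real_inner_of_norm_eq_one (by simp) (by simp))
    (real_inner_le_one_of_norm_eq_one (by simp) (by simp))

lemma sphDist_nonneg (p q : 𝕊²) : 0 ≤ sphDist p q := arccos_nonneg _

lemma sphDist_le_pi (p q : 𝕊²) : sphDist p q ≤ π := arccos_le_pi _

lemma sphDist_pos {p q : 𝕊²} (h : p ≠ q) : 0 < sphDist p q := by
  refine arccos_pos.2 ((real_inner_le_one_of_norm_eq_one (by simp) (by simp)).lt_of_ne ?_)
  rwa [Ne, inner_eq_one_iff_of_norm_eq_one (by simp) (by simp), Subtype.coe_inj]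

namespace IsSphGeodesic

variable {γ : ℝ → 𝕊²} {s t : ℝ}

lemma inner_eq_cos (hγ : IsSphGeodesic γ) (hs : s ∈ Icc (0 : ℝ) 1) (ht : t ∈ Icc (0 : ℝ) 1) :
    ⟪(γ s : ℝ³), γ t⟫ = cos ((s - t) * sphDist (γ 0) (γ 1)) := by
  rw [← cos_sphDist, hγ s hs t ht, ← cos_abs ((s - t) * _), abs_mul,
    abs_of_nonneg (sphDist_nonneg _ _)]

lemma sphDist_sq_le (hγ : IsSphGeodesic γ) (hs : s ∈ Icc (0 : ℝ) 1) (ht : t ∈ Icc (0 : ℝ) 1)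
    {c : ℝ} (hc : c ≤ 1) :
    sphDist (γ s) (γ t) ^ 2 ≤ (1 - t) * sphDist (γ s) (γ 0) ^ 2 + t * sphDist (γ s) (γ 1) ^ 2
      - c * (1 - t) * t * sphDist (γ 0) (γ 1) ^ 2 := by
  rw [hγ s hs t ht, hγ s hs 0 (left_mem_Icc.2 zero_le_one), hγ s hs 1 (right_mem_Icc.2 zero_le_one)]
  simp only [mul_pow, sq_abs]
  have : 0 ≤ (1 - c) * ((1 - t) * t) * sphDist (γ 0) (γ 1) ^ 2 :=
    mul_nonneg (mul_nonneg (sub_nonneg.2 hc) (mul_nonneg (sub_nonneg.2 ht.2) ht.1)) (sq_nonneg _)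
  linear_combination this

lemma exists_eq_cos_smul_add_sin_smul (hγ : IsSphGeodesic γ) :
    ∃ w : ℝ³, ∀ u ∈ Icc (0 : ℝ) 1,
      (γ u : ℝ³) =
        cos (u * sphDist (γ 0) (γ 1)) • (γ 0 : ℝ³)
          + sin (u * sphDist (γ 0) (γ 1)) • w := by
  set L := sphDist (γ 0) (γ 1)
  have h0 : (0 : ℝ) ∈ Icc (0 : ℝ) 1 := left_mem_Icc.2 zero_le_one
  have hinner0 : ∀ u ∈ Icc (0 : ℝ) 1, ⟪(γ 0 : ℝ³), γ u⟫ = cos (u * L) :=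
    fun u hu => by rw [hγ.inner_eq_cos h0 hu, zero_sub, neg_mul, cos_neg]
  rcases (show 0 ≤ L from sphDist_nonneg _ _).eq_or_lt with hL | hL
  · refine ⟨0, fun u hu => ?_⟩
    have := hinner0 u hu
    rw [← hL, mul_zero, cos_zero, inner_eq_one_iff_of_norm_eq_one (by simp) (by simp)] at this
    rw [← hL, mul_zero, cos_zero, sin_zero, one_smul, zero_smul, add_zero, this]
  have hsin : 0 < sin (L / 2) := sin_pos_of_pos_of_lt_pi (by linarith)
    (by linarith [sphDist_le_pi (γ 0) (γ 1), pi_pos])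
  have hhalf : (1 / 2 : ℝ) ∈ Icc (0 : ℝ) 1 := by norm_num
  -- The midpoint is used rather than `γ 1`, which is `-γ 0` when `L = π`.
  set w := (sin (L / 2))⁻¹ • ((γ (1 / 2) : ℝ³) - cos (L / 2) • (γ 0 : _))
  have hw : ∀ u ∈ Icc (0 : ℝ) 1, ⟪w, γ u⟫ = sin (u * L) := fun u hu => by
    rw [real_inner_smul_left, inner_sub_left, real_inner_smul_left, hγ.inner_eq_cos hhalf hu,
      hinner0 u hu, show (1 / 2 - u) * L = L / 2 - u * L by ring, cos_sub]
    field_simp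
    ring
  have hw0 : ⟪(γ 0 : ℝ³), w⟫ = 0 := by
    rw [real_inner_comm, hw 0 h0, zero_mul, sin_zero]
  have hw_norm : ‖w‖ = 1 := by
    have : ⟪w, w⟫ = 1 := by
      conv_lhs => rw [show w = _ from rfl, real_inner_smul_right, inner_sub_right,
        real_inner_smul_right, hw (1 / 2) hhalf, real_inner_comm, hw0]
      field_simp
      ring_nf
    rwa [real_inner_self_eq_norm_sq, pow_eq_one_iff_of_nonneg (norm_nonneg _) two_ne_zero] at this
  refine ⟨w, fun u hu => ?_⟩
  have h := eq_inner_smul_add_inner_smul (v := (γ u : ℝ³)) (by simp)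
    hw_norm hw0 (by rw [hinner0 u hu, hw u hu, cos_sq_add_sin_sq]; simp)
  rwa [hinner0 u hu, hw u hu] at h

lemma exists_sphDist_eq_arccos (hγ : IsSphGeodesic γ) (x : 𝕊²) :
    ∃ a b : ℝ, ∀ u ∈ Icc (0 : ℝ) 1, sphDist x (γ u) =
      arccos (a * cos (u * sphDist (γ 0) (γ 1)) + b * sin (u * sphDist (γ 0) (γ 1))) := by
  obtain ⟨w, hw⟩ := hγ.exists_eq_cos_smul_add_sin_smul
  refine ⟨⟪(x : ℝ³), γ 0⟫, ⟪(x : ℝ³), w⟫,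
    fun u hu => ?_⟩
  rw [sphDist, hw u hu, inner_add_right, real_inner_smul_right, real_inner_smul_right,
    mul_comm, mul_comm (sin _)]

end IsSphGeodesic

/-- for every `R ∈ (0,π)` there is `K = K(R)` such that on `S²` the squared
distance from any point `x` is `K`-convex along every minimal geodesic contained in the open
ball `B(x,R)`. -/
theorem stmt5 (R : ℝ) (hR0 : 0 < R) (hRπ : R < Real.pi) :
    ∃ K : ℝ, ∀ (x : Metric.sphere (0 : EuclideanSpace ℝ (Fin 3)) 1)
      (γ : ℝ → Metric.sphere (0 : EuclideanSpace ℝ (Fin 3)) 1),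
      IsSphGeodesic γ → (∀ t ∈ Set.Icc (0:ℝ) 1, sphDist x (γ t) < R) →
      ∀ t ∈ Set.Icc (0:ℝ) 1,
        sphDist x (γ t) ^ 2 ≤ (1 - t) * sphDist x (γ 0) ^ 2 + t * sphDist x (γ 1) ^ 2
          - K / 2 * (1 - t) * t * sphDist (γ 0) (γ 1) ^ 2 := by
  refine ⟨2 * (R * cos R / sin R), fun x γ hγ hball t ht => ?_⟩
  rw [mul_div_cancel_left₀ _ two_ne_zero]
  by_cases hx : ∃ s ∈ Icc (0 : ℝ) 1, x = γ s
  · obtain ⟨s, hs, rfl⟩ := hx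
    exact hγ.sphDist_sq_le hs ht
      ((div_le_one (sin_pos_of_pos_of_lt_pi hR0 hRπ)).2 (mul_cos_le_sin hR0.le hRπ.le))
  push Not at hx
  set L := sphDist (γ 0) (γ 1)
  obtain ⟨a, b, hdist⟩ := hγ.exists_sphDist_eq_arccos x
  have hθ : ∀ u ∈ interior (Icc (0 : ℝ) 1), 0 < sphDist x (γ u) ∧ sphDist x (γ u) ≤ R := by
    rw [interior_Icc]
    intro u hu
    have hu' := Ioo_subset_Icc_self hu
    exact ⟨sphDist_pos (hx u hu'), (hball u hu').le⟩
  have hconv := convexOn_arccos_sq_sub (convex_Icc 0 1) hRπ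
    (hasDerivAt_mul_cos_add_mul_sin a b L)
    (fun u => (hasDerivAt_mul_cos_add_mul_sin _ _ L u).congr_deriv (by ring))
    (fun u hu => hdist u (interior_subset hu) ▸ hθ u hu)
  have hK := hconv.le_sub_mul_of_sub_mul_sq ht
  rw [hdist t ht, hdist 0 (left_mem_Icc.2 zero_le_one), hdist 1 (right_mem_Icc.2 zero_le_one)]
  linarith
end

section
/- Let (M, F) be a Finsler manifold, x ∈ M, and suppose g_v(v,w) = g_w(v,w) for all nonzero v, w ∈ T_x M, where g_v is the fundamental tensor of F at v. Then F² satisfies the parallelogram identity on T_x M: F²(v+w) + F²(v−w) = 2F²(v) + 2F²(w) for all v, w, and hence F restricted to T_x M is induced by an inner product. -/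
/-!
Put `B v w := g_w(v, w)`. It is linear in `v` because `g_w` is bilinear, and linear in `w`
because the commutativity hypothesis rewrites it as `g_v(v, w)`. Hence `F² = B(v, v)` is a
quadratic form, which gives the parallelogram identity, and its polarization is a symmetric
bilinear form inducing `F`.
-/

namespace QuadraticMap

variable {R M N : Type*} [CommRing R] [AddCommGroup M] [Module R M] [AddCommGroup N] [Module R N]

theorem map_add_add_map_sub (Q : QuadraticMap R M N) (x y : M) :
    Q (x + y) + Q (x - y) = 2 • Q x + 2 • Q y := by
  obtain ⟨B, hB⟩ := Q.exists_companion
  rw [sub_eq_add_neg, hB, hB, QuadraticMap.map_neg, map_neg]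
  abel

end QuadraticMap

section CommutingTensor

variable {R M N : Type*} [CommSemiring R] [AddCommMonoid M] [Module R M] [AddCommMonoid N]
  [Module R N]

def bilinOfComm (g : M → M →ₗ[R] M →ₗ[R] N) (hcomm : ∀ v w, g v v w = g w v w) :
    LinearMap.BilinMap R M N :=
  LinearMap.mk₂ R (fun v w => g w v w)
    (fun v₁ v₂ w => by simp only [map_add, LinearMap.add_apply])
    (fun c v w => by simp only [map_smul, LinearMap.smul_apply])
    (fun v w₁ w₂ => by simp only [← hcomm, map_add])
    (fun c v w => by simp only [← hcomm, map_smul])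

theorem bilinOfComm_apply (g : M → M →ₗ[R] M →ₗ[R] N) (hcomm : ∀ v w, g v v w = g w v w)
    (v w : M) : bilinOfComm g hcomm v w = g w v w :=
  rfl

end CommutingTensor

theorem stmt6_general {V : Type*} [NormedAddCommGroup V] [NormedSpace ℝ V]
    (F : V → ℝ) (g : V → V →ₗ[ℝ] V →ₗ[ℝ] ℝ)
    (hgvv : ∀ v : V, g v v v = F v ^ 2)
    (hcomm : ∀ v w : V, g v v w = g w v w) :
    (∀ v w : V, F (v + w) ^ 2 + F (v - w) ^ 2 = 2 * F v ^ 2 + 2 * F w ^ 2) ∧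
      ∃ B : V →ₗ[ℝ] V →ₗ[ℝ] ℝ, (∀ x y : V, B x y = B y x) ∧ ∀ v : V, F v ^ 2 = B v v := by
  set Q : QuadraticForm ℝ V := (bilinOfComm g hcomm).toQuadraticMap
  have hQ : ∀ v, F v ^ 2 = Q v := fun v => by
    rw [LinearMap.BilinMap.toQuadraticMap_apply, bilinOfComm_apply, hgvv]
  refine ⟨fun v w => ?_, QuadraticMap.associated Q, QuadraticMap.associated_isSymm ℝ Q, fun v => ?_⟩
  · simpa only [hQ, nsmul_eq_mul, Nat.cast_ofNat] using Q.map_add_add_map_sub v w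
  · rw [hQ, QuadraticMap.associated_eq_self_apply]

/-- if the fundamental tensor `g` of a Minkowski norm `F` (on a tangent space `V`)
satisfies the commutativity `g_v(v,w) = g_w(v,w)`, then `F²` satisfies the parallelogram
identity, and hence `F` is induced by an inner product (a symmetric bilinear form `B` with
`F² = B(v,v)`). -/
theorem stmt6 {V : Type*} [NormedAddCommGroup V] [NormedSpace ℝ V]
    (F : V → ℝ) (g : V → V →ₗ[ℝ] V →ₗ[ℝ] ℝ)
    (hFcont : Continuous F) (hF0 : F 0 = 0) (hFpos : ∀ v : V, v ≠ 0 → 0 < F v)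
    (hFhom : ∀ (c : ℝ) (v : V), F (c • v) = |c| * F v)
    (hgsymm : ∀ (v x y : V), g v x y = g v y x)
    (hghom : ∀ (c : ℝ) (v : V), c ≠ 0 → g (c • v) = g v)
    (hgvv : ∀ v : V, g v v v = F v ^ 2)
    (hcomm : ∀ v w : V, g v v w = g w v w) :
    (∀ v w : V, F (v + w) ^ 2 + F (v - w) ^ 2 = 2 * F v ^ 2 + 2 * F w ^ 2) ∧
      ∃ B : V →ₗ[ℝ] V →ₗ[ℝ] ℝ, (∀ x y : V, B x y = B y x) ∧ ∀ v : V, F v ^ 2 = B v v :=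
  stmt6_general F g hgvv hcomm
end

section
/- Key lemma: Let (X,d) be a geodesic metric space in which the commutativity identity holds and the squared distance functions are K-convex along geodesics, and let φ : X → (-∞,∞] be λ-convex. Let x ∈ D(φ), τ > 0, and x_τ a minimizer of w ↦ φ(w) + d(x,w)²/(2τ). Then for every y ∈ D(φ): d(x_τ,y)² ≤ d(x,y)² − λτ d(x_τ,y)² + 2τ(φ(y) − φ(x_τ)) − (K/2) d(x,x_τ)². -/
/-- A curve `γ`, parametrized by `[0,1]`, is a minimal (constant-speed) geodesic. -/
def IsMinGeodesic {X : Type*} [MetricSpace X] (γ : ℝ → X) : Prop :=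
  ∀ s ∈ Set.Icc (0:ℝ) 1, ∀ t ∈ Set.Icc (0:ℝ) 1,
    dist (γ s) (γ t) = |s - t| * dist (γ 0) (γ 1)

/-!
Let `γ` run from `xτ` to `x` and `η` from `xτ` to `y`. Minimality of `xτ` tested against `η t`,
together with `λ`-convexity of `φ` along `η`, bounds the right difference quotient at `0` of
`t ↦ d(η t, x)²` from below by `2τ (φ xτ − φ y + (λ/2) d(xτ, y)²)`; `K`-convexity of `d(·, y)²`
along `γ` bounds that of `s ↦ d(γ s, y)²` from above by `d(x, y)² − d(xτ, y)² − (K/2) d(x, xτ)²`.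
The commutativity identity says both quotients have the same limit, and comparing the two bounds
gives the claim.
-/

open Filter Set Topology

theorem le_of_tendsto_nhdsGT_zero_of_le {f g : ℝ → ℝ} {l : ℝ}
    (hf : Tendsto f (𝓝[>] 0) (𝓝 l)) (hg : ContinuousAt g 0)
    (h : ∀ t ∈ Ioc (0 : ℝ) 1, f t ≤ g t) : l ≤ g 0 :=
  le_of_tendsto_of_tendsto hf (hg.tendsto.mono_left nhdsWithin_le_nhds)
    (eventually_of_mem (Ioc_mem_nhdsGT zero_lt_one) h)

theorem ge_of_tendsto_nhdsGT_zero_of_ge {f g : ℝ → ℝ} {l : ℝ}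
    (hf : Tendsto f (𝓝[>] 0) (𝓝 l)) (hg : ContinuousAt g 0)
    (h : ∀ t ∈ Ioc (0 : ℝ) 1, g t ≤ f t) : g 0 ≤ l :=
  le_of_tendsto_of_tendsto (hg.tendsto.mono_left nhdsWithin_le_nhds) hf
    (eventually_of_mem (Ioc_mem_nhdsGT zero_lt_one) h)

section

variable {X : Type*} [MetricSpace X]

theorem slope_sq_dist_le_of_sq_dist_convex {K : ℝ} (γ : ℝ → X) (y : X)
    (hK : ∀ t ∈ Icc (0 : ℝ) 1, dist y (γ t) ^ 2 ≤ (1 - t) * dist y (γ 0) ^ 2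
      + t * dist y (γ 1) ^ 2 - K / 2 * (1 - t) * t * dist (γ 0) (γ 1) ^ 2)
    {s : ℝ} (hs : s ∈ Ioc (0 : ℝ) 1) :
    (dist (γ s) y ^ 2 - dist (γ 0) y ^ 2) / s
      ≤ dist (γ 1) y ^ 2 - dist (γ 0) y ^ 2 - K / 2 * (1 - s) * dist (γ 0) (γ 1) ^ 2 := by
  have h := hK s (Ioc_subset_Icc_self hs)
  simp only [dist_comm y] at h
  rw [div_le_iff₀ hs.1]
  linarith

theorem slope_sq_dist_ge_of_prox_minimizer {lam τ a b : ℝ} (hτ : 0 < τ)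
    {φ : X → EReal} (η : ℝ → X) (x : X)
    (hlam : ∀ t ∈ Icc (0 : ℝ) 1,
      φ (η t) ≤ ((1 - t : ℝ) : EReal) * φ (η 0) + ((t : ℝ) : EReal) * φ (η 1)
        - ((lam / 2 * (1 - t) * t * dist (η 0) (η 1) ^ 2 : ℝ) : EReal))
    (hmin : ∀ w, φ (η 0) + ((dist x (η 0) ^ 2 / (2 * τ) : ℝ) : EReal)
      ≤ φ w + ((dist x w ^ 2 / (2 * τ) : ℝ) : EReal))
    (ha : φ (η 0) = a) (hb : φ (η 1) = b) {t : ℝ} (ht : t ∈ Ioc (0 : ℝ) 1) :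
    2 * τ * (a - b + lam / 2 * (1 - t) * dist (η 0) (η 1) ^ 2)
      ≤ (dist (η t) x ^ 2 - dist (η 0) x ^ 2) / t := by
  have hconv := hlam t (Ioc_subset_Icc_self ht)
  rw [ha, hb] at hconv
  rw [ha] at hmin
  have hprox : a + dist x (η 0) ^ 2 / (2 * τ) ≤ (1 - t) * a + t * b
      - lam / 2 * (1 - t) * t * dist (η 0) (η 1) ^ 2 + dist x (η t) ^ 2 / (2 * τ) := by
    exact_mod_cast (hmin (η t)).trans (add_le_add_left hconv _)
  rw [le_div_iff₀ ht.1, dist_comm (η t), dist_comm (η 0) x]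
  field_simp at hprox
  nlinarith

end

theorem stmt7_general {X : Type*} [MetricSpace X] (K lam τ : ℝ) (hτ : 0 < τ)
    (φ : X → EReal) (hbot : ∀ w, φ w ≠ ⊥)
    (hgeo : ∀ x y : X, ∃ γ : ℝ → X, IsMinGeodesic γ ∧ γ 0 = x ∧ γ 1 = y)
    (hcomm : ∀ γ η : ℝ → X, IsMinGeodesic γ → IsMinGeodesic η → γ 0 = η 0 →
      ∃ L : ℝ,
        Filter.Tendsto (fun s => (dist (γ s) (η 1) ^ 2 - dist (γ 0) (η 1) ^ 2) / s)
          (nhdsWithin 0 (Set.Ioi 0)) (nhds L) ∧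
        Filter.Tendsto (fun t => (dist (η t) (γ 1) ^ 2 - dist (η 0) (γ 1) ^ 2) / t)
          (nhdsWithin 0 (Set.Ioi 0)) (nhds L))
    (hK : ∀ (y : X) (γ : ℝ → X), IsMinGeodesic γ → ∀ t ∈ Set.Icc (0:ℝ) 1,
      dist y (γ t) ^ 2 ≤ (1 - t) * dist y (γ 0) ^ 2 + t * dist y (γ 1) ^ 2
        - K / 2 * (1 - t) * t * dist (γ 0) (γ 1) ^ 2)
    (hlam : ∀ γ : ℝ → X, IsMinGeodesic γ → ∀ t ∈ Set.Icc (0:ℝ) 1,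
      φ (γ t) ≤ ((1 - t : ℝ) : EReal) * φ (γ 0) + ((t : ℝ) : EReal) * φ (γ 1)
        - ((lam / 2 * (1 - t) * t * dist (γ 0) (γ 1) ^ 2 : ℝ) : EReal))
    (x : X) (xτ : X)
    (hmin : ∀ w, φ xτ + ((dist x xτ ^ 2 / (2 * τ) : ℝ) : EReal)
      ≤ φ w + ((dist x w ^ 2 / (2 * τ) : ℝ) : EReal)) :
    ∀ y : X, φ y ≠ ⊤ →
      ((dist xτ y ^ 2 : ℝ) : EReal)
        ≤ ((dist x y ^ 2 - lam * τ * dist xτ y ^ 2 : ℝ) : EReal)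
          + ((2 * τ : ℝ) : EReal) * (φ y - φ xτ)
          - ((K / 2 * dist x xτ ^ 2 : ℝ) : EReal) := by
  intro y hy
  have hxτ : φ xτ ≠ ⊤ := fun h => by
    have := hmin y
    rw [h, EReal.top_add_coe, top_le_iff] at this
    exact EReal.add_ne_top hy (EReal.coe_ne_top _) this
  obtain ⟨a, ha⟩ : ∃ a : ℝ, φ xτ = a := ⟨_, (EReal.coe_toReal hxτ (hbot xτ)).symm⟩
  obtain ⟨b, hb⟩ : ∃ b : ℝ, φ y = b := ⟨_, (EReal.coe_toReal hy (hbot y)).symm⟩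
  obtain ⟨γ, hγ, rfl, rfl⟩ := hgeo xτ x
  obtain ⟨η, hη, hη0, rfl⟩ := hgeo (γ 0) y
  obtain ⟨L, hLγ, hLη⟩ := hcomm γ η hγ hη hη0.symm
  have hupper := le_of_tendsto_nhdsGT_zero_of_le hLγ (by fun_prop)
    fun s hs => slope_sq_dist_le_of_sq_dist_convex γ (η 1) (hK (η 1) γ hγ) hs
  have hlower := ge_of_tendsto_nhdsGT_zero_of_ge hLη (by fun_prop)
    fun t ht => slope_sq_dist_ge_of_prox_minimizer hτ η (γ 1) (hlam η hη)
      (hη0 ▸ hmin) (hη0 ▸ ha) hb ht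
  rw [hη0] at hlower
  rw [ha, hb, dist_comm (γ 1) (γ 0)]
  simp only [sub_zero, mul_one] at hupper hlower
  have key : dist (γ 0) (η 1) ^ 2 ≤ dist (γ 1) (η 1) ^ 2 - lam * τ * dist (γ 0) (η 1) ^ 2
      + 2 * τ * (b - a) - K / 2 * dist (γ 0) (γ 1) ^ 2 := by
    linarith
  exact_mod_cast key

/-- Key lemma: in a geodesic metric space satisfying the commutativity identity
and `K`-convexity of squared distance functions along geodesics, for a `λ`-convex
`φ : X → (-∞,∞]`, `x ∈ D(φ)`, `τ > 0` and `x_τ` a minimizer of `w ↦ φ(w) + d(x,w)²/(2τ)`,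
one has, for all `y ∈ D(φ)`,
`d(x_τ,y)² ≤ d(x,y)² − λτ d(x_τ,y)² + 2τ(φ(y) − φ(x_τ)) − (K/2) d(x,x_τ)²`. -/
theorem stmt7 {X : Type*} [MetricSpace X] (K lam τ : ℝ) (hτ : 0 < τ)
    (φ : X → EReal) (hbot : ∀ w, φ w ≠ ⊥)
    (hgeo : ∀ x y : X, ∃ γ : ℝ → X, IsMinGeodesic γ ∧ γ 0 = x ∧ γ 1 = y)
    (hcomm : ∀ γ η : ℝ → X, IsMinGeodesic γ → IsMinGeodesic η → γ 0 = η 0 →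
      ∃ L : ℝ,
        Filter.Tendsto (fun s => (dist (γ s) (η 1) ^ 2 - dist (γ 0) (η 1) ^ 2) / s)
          (nhdsWithin 0 (Set.Ioi 0)) (nhds L) ∧
        Filter.Tendsto (fun t => (dist (η t) (γ 1) ^ 2 - dist (η 0) (γ 1) ^ 2) / t)
          (nhdsWithin 0 (Set.Ioi 0)) (nhds L))
    (hK : ∀ (y : X) (γ : ℝ → X), IsMinGeodesic γ → ∀ t ∈ Set.Icc (0:ℝ) 1,
      dist y (γ t) ^ 2 ≤ (1 - t) * dist y (γ 0) ^ 2 + t * dist y (γ 1) ^ 2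
        - K / 2 * (1 - t) * t * dist (γ 0) (γ 1) ^ 2)
    (hlam : ∀ γ : ℝ → X, IsMinGeodesic γ → ∀ t ∈ Set.Icc (0:ℝ) 1,
      φ (γ t) ≤ ((1 - t : ℝ) : EReal) * φ (γ 0) + ((t : ℝ) : EReal) * φ (γ 1)
        - ((lam / 2 * (1 - t) * t * dist (γ 0) (γ 1) ^ 2 : ℝ) : EReal))
    (x : X) (hx : φ x ≠ ⊤) (xτ : X)
    (hmin : ∀ w, φ xτ + ((dist x xτ ^ 2 / (2 * τ) : ℝ) : EReal)
      ≤ φ w + ((dist x w ^ 2 / (2 * τ) : ℝ) : EReal)) :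
    ∀ y : X, φ y ≠ ⊤ →
      ((dist xτ y ^ 2 : ℝ) : EReal)
        ≤ ((dist x y ^ 2 - lam * τ * dist xτ y ^ 2 : ℝ) : EReal)
          + ((2 * τ : ℝ) : EReal) * (φ y - φ xτ)
          - ((K / 2 * dist x xτ ^ 2 : ℝ) : EReal) :=
  stmt7_general K lam τ hτ φ hbot hgeo hcomm hK hlam x xτ hmin
end

section
/- Second form of the key lemma: under the hypotheses of the key lemma (commutativity, K-convexity of squared distance, λ-convexity of φ, x_τ a Moreau–Yosida minimizer for x with step τ), one has d(x_τ,y)² ≤ d(x,y)² − λτ d(x_τ,y)² + 2τ(φ(y) − φ(x_τ)) + max{0,−K}·τ(φ(x) − φ(x_τ)). -/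
open Filter Set Topology

section KeyLemma

variable {X : Type*} [MetricSpace X]

variable (X) in
def IsGeodesicSpace : Prop :=
  ∀ x y : X, ∃ γ : ℝ → X, IsMinGeodesic γ ∧ γ 0 = x ∧ γ 1 = y

variable (X) in
def FirstVariationsCommute : Prop :=
  ∀ γ η : ℝ → X, IsMinGeodesic γ → IsMinGeodesic η → γ 0 = η 0 →
    ∃ L : ℝ,
      Tendsto (fun s => (dist (γ s) (η 1) ^ 2 - dist (γ 0) (η 1) ^ 2) / s) (𝓝[>] 0) (𝓝 L) ∧
      Tendsto (fun t => (dist (η t) (γ 1) ^ 2 - dist (η 0) (γ 1) ^ 2) / t) (𝓝[>] 0) (𝓝 L)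

variable (X) in
def SqDistKConvex (K : ℝ) : Prop :=
  ∀ (y : X) (γ : ℝ → X), IsMinGeodesic γ → ∀ t ∈ Icc (0:ℝ) 1,
    dist y (γ t) ^ 2 ≤ (1 - t) * dist y (γ 0) ^ 2 + t * dist y (γ 1) ^ 2
      - K / 2 * (1 - t) * t * dist (γ 0) (γ 1) ^ 2

def LambdaConvex (φ : X → EReal) (lam : ℝ) : Prop :=
  ∀ γ : ℝ → X, IsMinGeodesic γ → ∀ t ∈ Icc (0:ℝ) 1,
    φ (γ t) ≤ ((1 - t : ℝ) : EReal) * φ (γ 0) + ((t : ℝ) : EReal) * φ (γ 1)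
      - ((lam / 2 * (1 - t) * t * dist (γ 0) (γ 1) ^ 2 : ℝ) : EReal)

def IsMoreauYosidaMinimizer (φ : X → EReal) (τ : ℝ) (x xτ : X) : Prop :=
  ∀ w, φ xτ + ((dist x xτ ^ 2 / (2 * τ) : ℝ) : EReal) ≤ φ w + ((dist x w ^ 2 / (2 * τ) : ℝ) : EReal)

variable {φ : X → EReal} {τ : ℝ} {x xτ : X}

theorem IsMoreauYosidaMinimizer.ne_top (hmin : IsMoreauYosidaMinimizer φ τ x xτ)
    (hx : φ x ≠ ⊤) (hx' : φ x ≠ ⊥) : φ xτ ≠ ⊤ := by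
  intro htop
  have := hmin x
  rw [htop, EReal.top_add_coe, top_le_iff, ← EReal.coe_toReal hx hx'] at this
  exact EReal.coe_ne_top _ (by exact_mod_cast this)

theorem IsMoreauYosidaMinimizer.dist_sq_le (hmin : IsMoreauYosidaMinimizer φ τ x xτ)
    (hτ : 0 < τ) (hx : φ x ≠ ⊤) (hbot : ∀ w, φ w ≠ ⊥) :
    dist x xτ ^ 2 ≤ 2 * τ * ((φ x).toReal - (φ xτ).toReal) := by
  have hcomp := hmin x
  rw [← EReal.coe_toReal hx (hbot x), ← EReal.coe_toReal (hmin.ne_top hx (hbot x)) (hbot xτ),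
    dist_self] at hcomp
  have hreal : (φ xτ).toReal + dist x xτ ^ 2 / (2 * τ) ≤ (φ x).toReal + 0 ^ 2 / (2 * τ) := by
    exact_mod_cast hcomp
  rw [zero_pow two_ne_zero, zero_div, add_zero, ← le_sub_iff_add_le', div_le_iff₀ (by positivity)]
    at hreal
  linarith

theorem LambdaConvex.apply_le_coe {lam : ℝ} (hlam : LambdaConvex φ lam) (hbot : ∀ w, φ w ≠ ⊥)
    {γ : ℝ → X} (hγ : IsMinGeodesic γ) (h0 : φ (γ 0) ≠ ⊤) (h1 : φ (γ 1) ≠ ⊤) {s : ℝ}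
    (hs : s ∈ Icc (0:ℝ) 1) :
    φ (γ s) ≤ (((1 - s) * (φ (γ 0)).toReal + s * (φ (γ 1)).toReal
      - lam / 2 * (1 - s) * s * dist (γ 0) (γ 1) ^ 2 : ℝ) : EReal) := by
  have h := hlam γ hγ s hs
  rw [← EReal.coe_toReal h0 (hbot _), ← EReal.coe_toReal h1 (hbot _)] at h
  exact_mod_cast h

theorem LambdaConvex.le_slope_of_isMoreauYosidaMinimizer {lam : ℝ} (hlam : LambdaConvex φ lam)
    (hbot : ∀ w, φ w ≠ ⊥) (hτ : 0 < τ) {γ : ℝ → X} (hγ : IsMinGeodesic γ)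
    (hmin : IsMoreauYosidaMinimizer φ τ x (γ 0)) (h0 : φ (γ 0) ≠ ⊤) (h1 : φ (γ 1) ≠ ⊤) {s : ℝ}
    (hs : s ∈ Ioc (0:ℝ) 1) :
    lam * τ * (1 - s) * dist (γ 0) (γ 1) ^ 2 - 2 * τ * ((φ (γ 1)).toReal - (φ (γ 0)).toReal)
      ≤ (dist (γ s) x ^ 2 - dist (γ 0) x ^ 2) / s := by
  have hcomp := (hmin (γ s)).trans
    (add_le_add_left (hlam.apply_le_coe hbot hγ h0 h1 ⟨hs.1.le, hs.2⟩) _)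
  rw [← EReal.coe_toReal h0 (hbot _)] at hcomp
  have hreal : (φ (γ 0)).toReal + dist x (γ 0) ^ 2 / (2 * τ)
      ≤ (1 - s) * (φ (γ 0)).toReal + s * (φ (γ 1)).toReal
        - lam / 2 * (1 - s) * s * dist (γ 0) (γ 1) ^ 2 + dist x (γ s) ^ 2 / (2 * τ) := by
    exact_mod_cast hcomp
  have hcancel : ∀ a : ℝ, 2 * τ * (a / (2 * τ)) = a := fun a => by field_simp
  have hscaled := mul_le_mul_of_nonneg_left hreal (by positivity : (0:ℝ) ≤ 2 * τ)
  rw [mul_add, mul_add, hcancel, hcancel] at hscaled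
  rw [le_div_iff₀ hs.1, dist_comm (γ s), dist_comm (γ 0) x]
  linarith

theorem SqDistKConvex.slope_le {K : ℝ} (hK : SqDistKConvex X K) {η : ℝ → X}
    (hη : IsMinGeodesic η) (y : X) {t : ℝ} (ht : t ∈ Ioc (0:ℝ) 1) :
    (dist (η t) y ^ 2 - dist (η 0) y ^ 2) / t
      ≤ dist (η 1) y ^ 2 - dist (η 0) y ^ 2 - K / 2 * (1 - t) * dist (η 0) (η 1) ^ 2 := by
  have h := hK y η hη t ⟨ht.1.le, ht.2⟩
  rw [div_le_iff₀ ht.1]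
  simp only [dist_comm y] at h
  linarith

theorem le_of_tendsto_nhdsGT_of_bounds {f g lo hi : ℝ → ℝ} {L : ℝ}
    (hlo : Continuous lo) (hhi : Continuous hi)
    (hf : Tendsto f (𝓝[>] 0) (𝓝 L)) (hg : Tendsto g (𝓝[>] 0) (𝓝 L))
    (hlof : ∀ t ∈ Ioc (0:ℝ) 1, lo t ≤ f t) (hghi : ∀ t ∈ Ioc (0:ℝ) 1, g t ≤ hi t) :
    lo 0 ≤ hi 0 := by
  have hmem : Ioc (0:ℝ) 1 ∈ 𝓝[>] (0:ℝ) := Ioc_mem_nhdsGT zero_lt_one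
  exact (le_of_tendsto_of_tendsto hlo.continuousWithinAt hf (eventually_of_mem hmem hlof)).trans
    (le_of_tendsto_of_tendsto hg hhi.continuousWithinAt (eventually_of_mem hmem hghi))

theorem dist_sq_le_of_isMoreauYosidaMinimizer {K lam : ℝ} (hgeo : IsGeodesicSpace X)
    (hcomm : FirstVariationsCommute X) (hK : SqDistKConvex X K) (hlam : LambdaConvex φ lam)
    (hbot : ∀ w, φ w ≠ ⊥) (hτ : 0 < τ) (hmin : IsMoreauYosidaMinimizer φ τ x xτ)
    (hxτ : φ xτ ≠ ⊤) {y : X} (hy : φ y ≠ ⊤) :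
    dist xτ y ^ 2 ≤ dist x y ^ 2 - lam * τ * dist xτ y ^ 2
      + 2 * τ * ((φ y).toReal - (φ xτ).toReal) - K / 2 * dist x xτ ^ 2 := by
  obtain ⟨γ, hγ, hγ0, hγ1⟩ := hgeo xτ y
  obtain ⟨η, hη, hη0, hη1⟩ := hgeo xτ x
  obtain ⟨L, hLγ, hLη⟩ := hcomm γ η hγ hη (hγ0.trans hη0.symm)
  subst hγ0 hγ1
  have hlimit := le_of_tendsto_nhdsGT_of_bounds (by fun_prop) (by fun_prop) hLγ hLη
    (fun s hs => hlam.le_slope_of_isMoreauYosidaMinimizer hbot hτ hγ (hη1 ▸ hmin) hxτ hy hs)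
    (fun t ht => hK.slope_le hη (γ 1) ht)
  simp only [hη0, hη1, sub_zero, mul_one] at hlimit
  rw [dist_comm (γ 0) x] at hlimit
  linarith

end KeyLemma

/-- Key lemma, second form: in a geodesic metric space satisfying the commutativity identity
and `K`-convexity of squared distance functions along geodesics, for a `λ`-convex
`φ : X → (-∞,∞]`, `x ∈ D(φ)`, `τ > 0` and `x_τ` a minimizer of `w ↦ φ(w) + d(x,w)²/(2τ)`,
one has, for all `y ∈ D(φ)`,
`d(x_τ,y)² ≤ d(x,y)² − λτ d(x_τ,y)² + 2τ(φ(y) − φ(x_τ)) + max{0,−K}·τ(φ(x) − φ(x_τ))`. -/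
theorem stmt8 {X : Type*} [MetricSpace X] (K lam τ : ℝ) (hτ : 0 < τ)
    (φ : X → EReal) (hbot : ∀ w, φ w ≠ ⊥)
    (hgeo : ∀ x y : X, ∃ γ : ℝ → X, IsMinGeodesic γ ∧ γ 0 = x ∧ γ 1 = y)
    (hcomm : ∀ γ η : ℝ → X, IsMinGeodesic γ → IsMinGeodesic η → γ 0 = η 0 →
      ∃ L : ℝ,
        Filter.Tendsto (fun s => (dist (γ s) (η 1) ^ 2 - dist (γ 0) (η 1) ^ 2) / s)
          (nhdsWithin 0 (Set.Ioi 0)) (nhds L) ∧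
        Filter.Tendsto (fun t => (dist (η t) (γ 1) ^ 2 - dist (η 0) (γ 1) ^ 2) / t)
          (nhdsWithin 0 (Set.Ioi 0)) (nhds L))
    (hK : ∀ (y : X) (γ : ℝ → X), IsMinGeodesic γ → ∀ t ∈ Set.Icc (0:ℝ) 1,
      dist y (γ t) ^ 2 ≤ (1 - t) * dist y (γ 0) ^ 2 + t * dist y (γ 1) ^ 2
        - K / 2 * (1 - t) * t * dist (γ 0) (γ 1) ^ 2)
    (hlam : ∀ γ : ℝ → X, IsMinGeodesic γ → ∀ t ∈ Set.Icc (0:ℝ) 1,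
      φ (γ t) ≤ ((1 - t : ℝ) : EReal) * φ (γ 0) + ((t : ℝ) : EReal) * φ (γ 1)
        - ((lam / 2 * (1 - t) * t * dist (γ 0) (γ 1) ^ 2 : ℝ) : EReal))
    (x : X) (hx : φ x ≠ ⊤) (xτ : X)
    (hmin : ∀ w, φ xτ + ((dist x xτ ^ 2 / (2 * τ) : ℝ) : EReal)
      ≤ φ w + ((dist x w ^ 2 / (2 * τ) : ℝ) : EReal)) :
    ∀ y : X, φ y ≠ ⊤ →
      ((dist xτ y ^ 2 : ℝ) : EReal)
        ≤ ((dist x y ^ 2 - lam * τ * dist xτ y ^ 2 : ℝ) : EReal)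
          + ((2 * τ : ℝ) : EReal) * (φ y - φ xτ)
          + ((max 0 (-K) * τ : ℝ) : EReal) * (φ x - φ xτ) := by
  intro y hy
  have hmin : IsMoreauYosidaMinimizer φ τ x xτ := hmin
  have hxτ := hmin.ne_top hx (hbot x)
  have hfirst := dist_sq_le_of_isMoreauYosidaMinimizer hgeo hcomm hK hlam hbot hτ hmin hxτ hy
  have hK_term : -K / 2 * dist x xτ ^ 2 ≤ max 0 (-K) * τ * ((φ x).toReal - (φ xτ).toReal) := by
    have := mul_le_mul (le_max_right 0 (-K)) (hmin.dist_sq_le hτ hx hbot) (sq_nonneg _)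
      (le_max_left 0 (-K))
    linarith
  rw [← EReal.coe_toReal hx (hbot x), ← EReal.coe_toReal hxτ (hbot xτ),
    ← EReal.coe_toReal hy (hbot y)]
  exact_mod_cast (by linarith : dist xτ y ^ 2 ≤ dist x y ^ 2 - lam * τ * dist xτ y ^ 2
    + 2 * τ * ((φ y).toReal - (φ xτ).toReal) + max 0 (-K) * τ * ((φ x).toReal - (φ xτ).toReal))
end

section
/- Gronwall-type lemma: let f : [0,T] → [0,∞) be absolutely continuous, λ ≤ 0, and g, h : [0,T] → [0,∞) locally integrable, with f'(t) + 2λ f(t) ≤ 2 g(t) √(f(t)) + h(t) for a.e. t. Then e^{λT} √(f(T)) ≤ (f(0) + ∫_0^T e^{2λt} h(t) dt)^{1/2} + ∫_0^T e^{λt} g(t) dt. -/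
/-!
Multiplying by the weight `e^{2λt}` reduces everything to `λ = 0`: `φ = e^{2λt} f` is
absolutely continuous with `φ' ≤ 2 a √φ + b` a.e., where `a = e^{λt} g` and `b = e^{2λt} h`.
Integrating and using `b ≥ 0` gives `φ t ≤ C + ∫₀ᵗ 2 a √φ` with `C = φ 0 + ∫₀ᵀ b`.
For `C > 0` the right-hand side `W` stays `≥ C`, so `√W` is absolutely continuous with
derivative `a √φ / √W ≤ a`, whence `√(φ T) ≤ √(W T) ≤ √C + ∫₀ᵀ a`; the case `C = 0` follows
by letting `C ↓ 0`.
-/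

open MeasureTheory Set Filter Topology

namespace AbsolutelyContinuousOnInterval

variable {X Y : Type*} [PseudoMetricSpace X] [PseudoMetricSpace Y] {a b : ℝ}

lemma eventually_mem_disjWithin :
    ∀ᶠ E in totalLengthFilter ⊓ 𝓟 (disjWithin a b), E ∈ disjWithin a b :=
  mem_inf_of_right (mem_principal_self _)

theorem congr {f g : ℝ → X} (hf : AbsolutelyContinuousOnInterval f a b)
    (hfg : EqOn f g (uIcc a b)) : AbsolutelyContinuousOnInterval g a b := by
  refine hf.congr' ?_
  filter_upwards [eventually_mem_disjWithin] with E hE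
  exact Finset.sum_congr rfl fun i hi => by rw [hfg (hE.1 i hi).1, hfg (hE.1 i hi).2]

theorem _root_.LipschitzOnWith.comp_absolutelyContinuousOnInterval {g : X → Y} {f : ℝ → X}
    {K : NNReal} {s : Set X} (hg : LipschitzOnWith K g s)
    (hf : AbsolutelyContinuousOnInterval f a b) (hfs : MapsTo f (uIcc a b) s) :
    AbsolutelyContinuousOnInterval (g ∘ f) a b := by
  have hlim : Tendsto (fun E : ℕ × (ℕ → ℝ × ℝ) => (K : ℝ) *
      ∑ i ∈ Finset.range E.1, dist (f (E.2 i).1) (f (E.2 i).2))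
      (totalLengthFilter ⊓ 𝓟 (disjWithin a b)) (𝓝 0) := by
    simpa only [mul_zero] using Tendsto.const_mul (K : ℝ) hf
  refine squeeze_zero' (Eventually.of_forall fun E => Finset.sum_nonneg fun i _ => dist_nonneg)
    ?_ hlim
  filter_upwards [eventually_mem_disjWithin] with E hE
  rw [Finset.mul_sum]
  exact Finset.sum_le_sum fun i hi => hg.dist_le_mul _ (hfs (hE.1 i hi).1) _ (hfs (hE.1 i hi).2)

theorem const_add {F : Type*} [SeminormedAddCommGroup F] {f : ℝ → F} (c : F)
    (hf : AbsolutelyContinuousOnInterval f a b) :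
    AbsolutelyContinuousOnInterval (fun t => c + f t) a b :=
  (LipschitzWith.const c).lipschitzOnWith.absolutelyContinuousOnInterval.fun_add hf

theorem sub_le_integral_of_hasDerivAt_le {u u' k : ℝ → ℝ} (hab : a ≤ b)
    (hu : AbsolutelyContinuousOnInterval u a b)
    (hu' : ∀ᵐ t, t ∈ Icc a b → HasDerivAt u (u' t) t) (hk : IntervalIntegrable k volume a b)
    (hle : ∀ᵐ t, t ∈ Icc a b → u' t ≤ k t) :
    u b - u a ≤ ∫ t in a..b, k t := by
  rw [← hu.integral_deriv_eq_sub]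
  refine intervalIntegral.integral_mono_ae_restrict hab hu.intervalIntegrable_deriv hk ?_
  rw [EventuallyLE, ae_restrict_iff' measurableSet_Icc]
  filter_upwards [hu', hle] with t hderiv hbound ht
  rw [(hderiv ht).deriv]
  exact hbound ht

end AbsolutelyContinuousOnInterval

theorem Real.lipschitzOnWith_sqrt_Ici {ε : ℝ} (hε : 0 < ε) :
    LipschitzOnWith (Real.toNNReal (1 / (2 * √ε))) Real.sqrt (Ici ε) := by
  refine LipschitzOnWith.of_dist_le' fun x hx y hy => ?_
  have hεx : √ε ≤ √x := Real.sqrt_le_sqrt hx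
  have hεy : √ε ≤ √y := Real.sqrt_le_sqrt hy
  have hε' : 0 < √ε := Real.sqrt_pos.2 hε
  have hdiff : x - y = (√x - √y) * (√x + √y) := by
    linear_combination -(Real.sq_sqrt (hε.le.trans hx)) + Real.sq_sqrt (hε.le.trans hy)
  rw [Real.dist_eq, Real.dist_eq, hdiff, abs_mul, abs_of_pos (show 0 < √x + √y by linarith),
    one_div, ← div_eq_inv_mul, le_div_iff₀ (by positivity)]
  exact mul_le_mul_of_nonneg_left (by linarith) (abs_nonneg _)

theorem Real.sqrt_exp_two_mul_mul (x y : ℝ) : √(Real.exp (2 * x) * y) = Real.exp x * √y := by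
  rw [Real.sqrt_mul (Real.exp_pos _).le, show 2 * x = x + x by ring, Real.exp_add,
    Real.sqrt_mul_self (Real.exp_pos _).le]

theorem HasDerivAt.exp_const_mul_mul {f : ℝ → ℝ} {f' c t : ℝ} (hf : HasDerivAt f f' t) :
    HasDerivAt (fun s => Real.exp (c * s) * f s) (Real.exp (c * t) * (f' + c * f t)) t := by
  have hE : HasDerivAt (fun s => Real.exp (c * s)) (Real.exp (c * t) * c) t := by
    simpa using ((hasDerivAt_id t).const_mul c).exp
  exact (hE.fun_mul hf).congr_deriv (by ring)

section SqrtGronwall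

variable {φ a : ℝ → ℝ} {C T : ℝ}

theorem sqrt_le_sqrt_add_integral_of_le_add_integral_of_pos (hT : 0 ≤ T) (hC : 0 < C)
    (hφ : ContinuousOn φ (Icc 0 T)) (ha : IntervalIntegrable a volume 0 T)
    (ha0 : ∀ t ∈ Icc 0 T, 0 ≤ a t)
    (hle : ∀ t ∈ Icc 0 T, φ t ≤ C + ∫ τ in 0..t, 2 * a τ * √(φ τ)) :
    √(φ T) ≤ √C + ∫ t in 0..T, a t := by
  set I : ℝ → ℝ := fun t => ∫ τ in 0..t, 2 * a τ * √(φ τ)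
  have hI_int : IntervalIntegrable (fun τ => 2 * a τ * √(φ τ)) volume 0 T :=
    (ha.const_mul 2).mul_continuousOn (by rw [uIcc_of_le hT]; exact hφ.sqrt)
  have hI_nonneg : ∀ t ∈ Icc 0 T, 0 ≤ I t := fun t ht =>
    intervalIntegral.integral_nonneg ht.1 fun τ hτ =>
      mul_nonneg (mul_nonneg two_pos.le (ha0 τ ⟨hτ.1, hτ.2.trans ht.2⟩)) (Real.sqrt_nonneg _)
  have hR_ac : AbsolutelyContinuousOnInterval (fun t => √(C + I t)) 0 T :=
    (Real.lipschitzOnWith_sqrt_Ici hC).comp_absolutelyContinuousOnInterval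
      ((hI_int.absolutelyContinuousOnInterval_intervalIntegral left_mem_uIcc).const_add C)
      fun t ht => by rw [uIcc_of_le hT] at ht; simpa using hI_nonneg t ht
  have hR_deriv : ∀ᵐ t, t ∈ Icc 0 T →
      HasDerivAt (fun t => √(C + I t)) (2 * a t * √(φ t) / (2 * √(C + I t))) t := by
    filter_upwards [hI_int.ae_hasDerivAt_integral] with t ht hmem
    rw [uIcc_of_le hT] at ht
    exact ((ht hmem 0 (left_mem_Icc.2 hT)).const_add C).sqrt (by linarith [hI_nonneg t hmem])
  have hR_deriv_le : ∀ t ∈ Icc 0 T, 2 * a t * √(φ t) / (2 * √(C + I t)) ≤ a t := by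
    intro t ht
    have hR_pos : 0 < √(C + I t) := Real.sqrt_pos.2 (by linarith [hI_nonneg t ht])
    rw [div_le_iff₀ (by positivity)]
    nlinarith [ha0 t ht, Real.sqrt_le_sqrt (hle t ht)]
  have hR_growth := hR_ac.sub_le_integral_of_hasDerivAt_le hT hR_deriv ha
    (Eventually.of_forall hR_deriv_le)
  simp only [I, intervalIntegral.integral_same, add_zero] at hR_growth
  calc √(φ T) ≤ √(C + I T) := Real.sqrt_le_sqrt (hle T (right_mem_Icc.2 hT))
    _ ≤ √C + ∫ t in 0..T, a t := by linarith

theorem sqrt_le_sqrt_add_integral_of_le_add_integral (hT : 0 ≤ T) (hC : 0 ≤ C)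
    (hφ : ContinuousOn φ (Icc 0 T)) (ha : IntervalIntegrable a volume 0 T)
    (ha0 : ∀ t ∈ Icc 0 T, 0 ≤ a t)
    (hle : ∀ t ∈ Icc 0 T, φ t ≤ C + ∫ τ in 0..t, 2 * a τ * √(φ τ)) :
    √(φ T) ≤ √C + ∫ t in 0..T, a t := by
  have hε : ∀ ε > 0, √(φ T) ≤ √(C + ε) + ∫ t in 0..T, a t := fun ε hε =>
    sqrt_le_sqrt_add_integral_of_le_add_integral_of_pos hT (by linarith) hφ ha ha0
      fun t ht => by linarith [hle t ht]
  have hlim : Tendsto (fun ε => √(C + ε) + ∫ t in 0..T, a t) (𝓝[>] 0)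
      (𝓝 (√C + ∫ t in 0..T, a t)) := by
    have hcont : Continuous fun ε => √(C + ε) + ∫ t in 0..T, a t := by fun_prop
    simpa using hcont.continuousWithinAt (s := Ioi 0) (x := 0) |>.tendsto
  exact ge_of_tendsto hlim (eventually_nhdsWithin_of_forall hε)

theorem sqrt_le_sqrt_add_integral_of_hasDerivAt_le {φ' b : ℝ → ℝ} (hT : 0 ≤ T)
    (hφ : AbsolutelyContinuousOnInterval φ 0 T) (hφ0 : 0 ≤ φ 0)
    (hφ' : ∀ᵐ t, t ∈ Icc 0 T → HasDerivAt φ (φ' t) t)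
    (ha : IntervalIntegrable a volume 0 T) (hb : IntervalIntegrable b volume 0 T)
    (ha0 : ∀ t ∈ Icc 0 T, 0 ≤ a t) (hb0 : ∀ t ∈ Icc 0 T, 0 ≤ b t)
    (hle : ∀ᵐ t, t ∈ Icc 0 T → φ' t ≤ 2 * a t * √(φ t) + b t) :
    √(φ T) ≤ √(φ 0 + ∫ t in 0..T, b t) + ∫ t in 0..T, a t := by
  have hφc : ContinuousOn φ (Icc 0 T) := uIcc_of_le hT ▸ hφ.continuousOn
  refine sqrt_le_sqrt_add_integral_of_le_add_integral hT
    (add_nonneg hφ0 (intervalIntegral.integral_nonneg hT hb0)) hφc ha ha0 fun s hs => ?_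
  have hIcc : Icc 0 s ⊆ Icc 0 T := Icc_subset_Icc_right hs.2
  have huIcc : uIcc 0 s ⊆ uIcc 0 T := by
    rw [uIcc_of_le hs.1, uIcc_of_le hT]; exact hIcc
  have hsqrt_int : IntervalIntegrable (fun τ => 2 * a τ * √(φ τ)) volume 0 s :=
    ((ha.mono_set huIcc).const_mul 2).mul_continuousOn
      (by rw [uIcc_of_le hs.1]; exact (hφc.mono hIcc).sqrt)
  have hgrowth := (hφ.mono huIcc).sub_le_integral_of_hasDerivAt_le hs.1
    (by filter_upwards [hφ'] with t h ht using h (hIcc ht)) (hsqrt_int.add (hb.mono_set huIcc))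
    (by filter_upwards [hle] with t h ht using h (hIcc ht))
  have hb_mono : ∫ t in 0..s, b t ≤ ∫ t in 0..T, b t :=
    intervalIntegral.integral_mono_interval le_rfl hs.1 hs.2
      ((ae_restrict_iff' measurableSet_Ioc).2 <|
        Eventually.of_forall fun t ht => hb0 t (Ioc_subset_Icc_self ht)) hb
  rw [intervalIntegral.integral_add hsqrt_int (hb.mono_set huIcc)] at hgrowth
  linarith

end SqrtGronwall

theorem stmt10_general (T lam : ℝ) (hT : 0 < T)
    (f f' g h : ℝ → ℝ)
    (hfnn : ∀ t ∈ Set.Icc (0:ℝ) T, 0 ≤ f t)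
    (hgnn : ∀ t ∈ Set.Icc (0:ℝ) T, 0 ≤ g t)
    (hhnn : ∀ t ∈ Set.Icc (0:ℝ) T, 0 ≤ h t)
    (hg : IntervalIntegrable g volume 0 T)
    (hh : IntervalIntegrable h volume 0 T)
    (hf' : IntervalIntegrable f' volume 0 T)
    (hderiv : ∀ᵐ t ∂(volume.restrict (Set.Icc (0:ℝ) T)), HasDerivAt f (f' t) t)
    (hftc : ∀ s ∈ Set.Icc (0:ℝ) T, f s = f 0 + ∫ t in (0:ℝ)..s, f' t)
    (hineq : ∀ᵐ t ∂(volume.restrict (Set.Icc (0:ℝ) T)),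
      f' t + 2 * lam * f t ≤ 2 * g t * Real.sqrt (f t) + h t) :
    Real.exp (lam * T) * Real.sqrt (f T)
      ≤ Real.sqrt (f 0 + ∫ t in (0:ℝ)..T, Real.exp (2 * lam * t) * h t)
        + ∫ t in (0:ℝ)..T, Real.exp (lam * t) * g t := by
  have hf_ac : AbsolutelyContinuousOnInterval f 0 T :=
    ((hf'.absolutelyContinuousOnInterval_intervalIntegral left_mem_uIcc).const_add (f 0)).congr
      fun s hs => (hftc s (uIcc_of_le hT.le ▸ hs)).symm
  have hE_ac : AbsolutelyContinuousOnInterval (fun t => Real.exp (2 * lam * t)) 0 T :=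
    (by fun_prop : ContDiff ℝ 1 fun t => Real.exp (2 * lam * t)).contDiffOn
      |>.absolutelyContinuousOnInterval
  rw [ae_restrict_iff' measurableSet_Icc] at hderiv hineq
  have hbound : ∀ᵐ t, t ∈ Icc 0 T →
      Real.exp (2 * lam * t) * (f' t + 2 * lam * f t) ≤
        2 * (Real.exp (lam * t) * g t) * √(Real.exp (2 * lam * t) * f t)
          + Real.exp (2 * lam * t) * h t := by
    filter_upwards [hineq] with t ht hmem
    rw [mul_assoc 2 lam t, Real.sqrt_exp_two_mul_mul]
    refine (mul_le_mul_of_nonneg_left (ht hmem) (Real.exp_pos _).le).trans_eq ?_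
    rw [two_mul (lam * t), Real.exp_add]
    ring
  have hmain := sqrt_le_sqrt_add_integral_of_hasDerivAt_le
    (a := fun t => Real.exp (lam * t) * g t) (b := fun t => Real.exp (2 * lam * t) * h t)
    hT.le (hE_ac.fun_mul hf_ac) (by simpa using hfnn 0 (left_mem_Icc.2 hT.le))
    (by filter_upwards [hderiv] with t ht hmem using (ht hmem).exp_const_mul_mul)
    (hg.continuousOn_mul (by fun_prop)) (hh.continuousOn_mul (by fun_prop))
    (fun t ht => mul_nonneg (Real.exp_pos _).le (hgnn t ht))
    (fun t ht => mul_nonneg (Real.exp_pos _).le (hhnn t ht)) hbound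
  simpa [mul_assoc, Real.sqrt_exp_two_mul_mul] using hmain

/-- Gronwall-type lemma: if `f ≥ 0` is absolutely continuous on `[0,T]` with
a.e. derivative `f'`, `λ ≤ 0`, `g, h ≥ 0` integrable, and
`f' + 2λ f ≤ 2 g √f + h` a.e., then
`e^{λT} √(f T) ≤ (f 0 + ∫₀^T e^{2λt} h)^{1/2} + ∫₀^T e^{λt} g`. -/
theorem stmt10 (T lam : ℝ) (hT : 0 < T) (hlam : lam ≤ 0)
    (f f' g h : ℝ → ℝ)
    (hfnn : ∀ t ∈ Set.Icc (0:ℝ) T, 0 ≤ f t)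
    (hgnn : ∀ t ∈ Set.Icc (0:ℝ) T, 0 ≤ g t)
    (hhnn : ∀ t ∈ Set.Icc (0:ℝ) T, 0 ≤ h t)
    (hg : IntervalIntegrable g volume 0 T)
    (hh : IntervalIntegrable h volume 0 T)
    (hf' : IntervalIntegrable f' volume 0 T)
    (hderiv : ∀ᵐ t ∂(volume.restrict (Set.Icc (0:ℝ) T)), HasDerivAt f (f' t) t)
    (hftc : ∀ s ∈ Set.Icc (0:ℝ) T, f s = f 0 + ∫ t in (0:ℝ)..s, f' t)
    (hineq : ∀ᵐ t ∂(volume.restrict (Set.Icc (0:ℝ) T)),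
      f' t + 2 * lam * f t ≤ 2 * g t * Real.sqrt (f t) + h t) :
    Real.exp (lam * T) * Real.sqrt (f T)
      ≤ Real.sqrt (f 0 + ∫ t in (0:ℝ)..T, Real.exp (2 * lam * t) * h t)
        + ∫ t in (0:ℝ)..T, Real.exp (lam * t) * g t :=
  stmt10_general T lam hT f f' g h hfnn hgnn hhnn hg hh hf' hderiv hftc hineq
end

section
/- Under the EVI hypothesis of the previous statement, and using that t ↦ φ(ξ(t)) is non-increasing, one obtains for all T > 0 and y ∈ D(φ): d(ξ(T),y)² ≤ e^{−λT} d(x₀,y)² − 2((1 − e^{−λT})/λ)(φ(ξ(T)) − φ(y)), where (1 − e^{−λT})/λ is interpreted as T when λ = 0. -/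
/-!
Testing the EVI against `y = ξ u` and using the local Lipschitz bound `d(ξ t, ξ u)² = O((t - u)²)`
gives `∫_u^v φ(ξ t) dt ≤ (v - u) φ(ξ u) + O((v - u)³)` on compact subintervals of `(0, ∞)`, and a
continuous function with this property is non-increasing. For fixed `y`, the EVI then says that
`ψ t = d(ξ t, y)²` has right Dini derivative at most `-λ ψ t + 2 (φ y - φ (ξ T))` on `[0, T)`,
and Gronwall's inequality gives the bound.
-/

open MeasureTheory Set Filter Topology

lemma exists_lt_of_integral_lt {g : ℝ → ℝ} {x v c : ℝ} (hxv : x ≤ v)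
    (hg : IntervalIntegrable g volume x v) (h : ∫ t in x..v, g t < (v - x) * c) :
    ∃ t ∈ Icc x v, g t < c := by
  by_contra! hc
  have := intervalIntegral.integral_mono_on hxv intervalIntegrable_const hg hc
  rw [intervalIntegral.integral_const, smul_eq_mul] at this
  linarith

lemma le_of_integral_le_mul_add_cube {f : ℝ → ℝ} {a b K : ℝ} (hab : a ≤ b)
    (hf : ContinuousOn f (Icc a b))
    (h : ∀ u v, a ≤ u → u ≤ v → v ≤ b → ∫ t in u..v, f t ≤ (v - u) * f u + K * (v - u) ^ 3) :
    f b ≤ f a := by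
  -- Continuous induction for the tilted function `f t - ε t`: on short intervals the cubic error
  -- is beaten by the tilt.
  suffices H : ∀ ε > 0, f b - ε * b ≤ f a - ε * a by
    have hlim : Tendsto (fun ε => f a + ε * (b - a)) (𝓝[>] 0) (𝓝 (f a)) := by
      have : Continuous fun ε : ℝ => f a + ε * (b - a) := by fun_prop
      simpa using (this.tendsto 0).mono_left nhdsWithin_le_nhds
    exact ge_of_tendsto hlim (eventually_nhdsWithin_of_forall fun ε hε => by linarith [H ε hε])
  intro ε hε
  set g : ℝ → ℝ := fun t => f t - ε * t with hg_def
  have hg : ContinuousOn g (Icc a b) := hf.sub (continuousOn_const.mul continuousOn_id)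
  have hsub : Icc a b ⊆ {t | g t ≤ g a} := by
    refine IsClosed.Icc_subset_of_forall_exists_gt ?_ (le_refl (g a)) ?_
    · rw [inter_comm]
      exact hg.preimage_isClosed_of_isClosed isClosed_Icc isClosed_Iic
    rintro x ⟨hxa, hxb⟩ y hy
    have hsmall : ∀ᶠ v in 𝓝[>] x, K * (v - x) < ε / 2 := by
      have : Continuous fun v => K * (v - x) := by fun_prop
      exact ((this.tendsto' x 0 (by simp)).eventually_lt_const (half_pos hε)).filter_mono
        nhdsWithin_le_nhds
    obtain ⟨v, ⟨hxv, hvyb⟩, hv⟩ :=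
      (Eventually.and (Ioc_mem_nhdsGT (lt_min hy hxb.2)) hsmall).exists
    have hvb : Icc x v ⊆ Icc a b := Icc_subset_Icc hxb.1 (hvyb.trans (min_le_right _ _))
    have hint : ∫ t in x..v, g t < (v - x) * g x := by
      have hfi : IntervalIntegrable f volume x v :=
        (hf.mono hvb).intervalIntegrable_of_Icc hxv.le
      have hsplit : ∫ t in x..v, g t = (∫ t in x..v, f t) - ε * ((v ^ 2 - x ^ 2) / 2) := by
        rw [hg_def, intervalIntegral.integral_sub hfi
          ((continuous_const_mul ε).intervalIntegrable x v),
          intervalIntegral.integral_const_mul, integral_id]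
      have hcube : K * (v - x) ^ 3 < ε / 2 * (v - x) ^ 2 := by
        have := mul_lt_mul_of_pos_right hv (pow_pos (sub_pos.2 hxv) 2)
        linarith [show K * (v - x) * (v - x) ^ 2 = K * (v - x) ^ 3 by ring]
      have := h x v hxb.1 hxv.le (hvyb.trans (min_le_right _ _))
      rw [hsplit, hg_def]
      nlinarith
    obtain ⟨t, ht, hgt⟩ :=
      exists_lt_of_integral_lt hxv.le ((hg.mono hvb).intervalIntegrable_of_Icc hxv.le) hint
    exact ⟨t, hgt.le.trans hxa, lt_of_le_of_ne ht.1 (by rintro rfl; exact lt_irrefl _ hgt),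
      ht.2.trans (hvyb.trans (min_le_left _ _))⟩
  exact hsub ⟨hab, le_rfl⟩

section Primitive

variable {ψ D : ℝ → ℝ} {a c : ℝ}

lemma ae_restrict_Icc_of_ae_restrict_Ioi {P : ℝ → Prop} {u v : ℝ} (hu : a ≤ u)
    (h : ∀ᵐ t ∂volume.restrict (Ioi a), P t) : ∀ᵐ t ∂volume.restrict (Icc u v), P t := by
  rw [← Measure.restrict_congr_set Ioc_ae_eq_Icc]
  exact ae_restrict_of_ae_restrict_of_subset (fun t ht => hu.trans_lt ht.1) h

lemma sub_eq_integral_of_eq_add_integral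
    (hD : ∀ s ∈ Ici a, IntervalIntegrable D volume a s)
    (hψ : ∀ s ∈ Ici a, ψ s = c + ∫ t in a..s, D t) {u v : ℝ} (hu : a ≤ u) (hv : a ≤ v) :
    ψ v - ψ u = ∫ t in u..v, D t := by
  rw [hψ v hv, hψ u hu, ← intervalIntegral.integral_interval_sub_left (hD v hv) (hD u hu)]
  ring

lemma continuousOn_Ici_of_eq_add_integral
    (hD : ∀ s ∈ Ici a, IntervalIntegrable D volume a s)
    (hψ : ∀ s ∈ Ici a, ψ s = c + ∫ t in a..s, D t) : ContinuousOn ψ (Ici a) := by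
  refine ContinuousOn.congr (fun x hx => ?_) hψ
  have hx1 : a ≤ x + 1 := by linarith [mem_Ici.1 hx]
  have hprim := intervalIntegral.continuousOn_primitive_interval' (hD (x + 1) hx1) left_mem_uIcc
  rw [uIcc_of_le hx1, ← Ici_inter_Iic] at hprim
  exact (continuousWithinAt_const.add (hprim x ⟨hx, by simp⟩)).mono_of_mem_nhdsWithin
    (inter_mem_nhdsWithin _ (Iic_mem_nhds (by linarith)))

lemma frequently_slope_lt_of_ae_le {G : ℝ → ℝ}
    (hD : ∀ s ∈ Ici a, IntervalIntegrable D volume a s)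
    (hψ : ∀ s ∈ Ici a, ψ s = c + ∫ t in a..s, D t)
    (hDG : ∀ᵐ t ∂volume.restrict (Ioi a), D t ≤ G t) (hG : ContinuousOn G (Ici a))
    {x r : ℝ} (hx : a ≤ x) (hr : G x < r) :
    ∃ᶠ z in 𝓝[>] x, (z - x)⁻¹ * (ψ z - ψ x) < r := by
  obtain ⟨r', hGr', hr'⟩ := exists_between hr
  have hnear : ∀ᶠ t in 𝓝[≥] x, G t < r' :=
    ((hG x hx).mono (Ici_subset_Ici.2 hx)).eventually_lt_const hGr'
  obtain ⟨b, hxb, hb⟩ := mem_nhdsGE_iff_exists_Ico_subset.1 hnear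
  refine Eventually.frequently ?_
  filter_upwards [Ioo_mem_nhdsGT hxb] with z ⟨hxz, hzb⟩
  have hz : a ≤ z := hx.trans hxz.le
  have hDr : ∫ t in x..z, D t ≤ ∫ _ in x..z, r' := by
    refine intervalIntegral.integral_mono_ae_restrict hxz.le
      ((hD x hx).symm.trans (hD z hz)) intervalIntegrable_const ?_
    filter_upwards [ae_restrict_Icc_of_ae_restrict_Ioi hx hDG,
      ae_restrict_mem measurableSet_Icc] with t htG ht
    exact htG.trans (hb ⟨ht.1, ht.2.trans_lt hzb⟩).le
  rw [intervalIntegral.integral_const, smul_eq_mul,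
    ← sub_eq_integral_of_eq_add_integral hD hψ hx hz] at hDr
  calc (z - x)⁻¹ * (ψ z - ψ x) ≤ r' := by
        rw [inv_mul_le_iff₀ (sub_pos.2 hxz)]; exact hDr
    _ < r := hr'

lemma le_gronwallBound_of_ae_le {G : ℝ → ℝ} {K ε T : ℝ}
    (hD : ∀ s ∈ Ici a, IntervalIntegrable D volume a s)
    (hψ : ∀ s ∈ Ici a, ψ s = c + ∫ t in a..s, D t)
    (hDG : ∀ᵐ t ∂volume.restrict (Ioi a), D t ≤ G t) (hG : ContinuousOn G (Ici a)) (hT : a ≤ T)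
    (bound : ∀ t ∈ Ico a T, G t ≤ K * ψ t + ε) :
    ψ T ≤ gronwallBound (ψ a) K ε (T - a) :=
  le_gronwallBound_of_liminf_deriv_right_le
    ((continuousOn_Ici_of_eq_add_integral hD hψ).mono Icc_subset_Ici_self)
    (fun _ hx _ hr => frequently_slope_lt_of_ae_le hD hψ hDG hG hx.1 hr) le_rfl bound T ⟨hT, le_rfl⟩

lemma evi_integral_le {f : ℝ → ℝ} {lam p u v : ℝ}
    (hD : ∀ s ∈ Ici a, IntervalIntegrable D volume a s)
    (hψ : ∀ s ∈ Ici a, ψ s = c + ∫ t in a..s, D t) (hf : ContinuousOn f (Ici a))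
    (hevi : ∀ᵐ t ∂volume.restrict (Ioi a), 1 / 2 * D t + lam / 2 * ψ t + f t ≤ p)
    (hu : a ≤ u) (huv : u ≤ v) :
    1 / 2 * (ψ v - ψ u) + lam / 2 * (∫ t in u..v, ψ t) + ∫ t in u..v, f t ≤ (v - u) * p := by
  have hv : a ≤ v := hu.trans huv
  have hsub : uIcc u v ⊆ Ici a := by
    rw [uIcc_of_le huv]; exact fun t ht => hu.trans ht.1
  have hDi : IntervalIntegrable D volume u v := (hD u hu).symm.trans (hD v hv)
  have hψi : IntervalIntegrable ψ volume u v :=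
    ((continuousOn_Ici_of_eq_add_integral hD hψ).mono hsub).intervalIntegrable
  have hfi : IntervalIntegrable f volume u v := (hf.mono hsub).intervalIntegrable
  have hmono := intervalIntegral.integral_mono_ae_restrict huv
    (((hDi.const_mul (1 / 2)).add (hψi.const_mul (lam / 2))).add hfi)
    intervalIntegrable_const (ae_restrict_Icc_of_ae_restrict_Ioi hu hevi)
  simp only [intervalIntegral.integral_add ((hDi.const_mul _).add (hψi.const_mul _)) hfi,
    intervalIntegral.integral_add (hDi.const_mul _) (hψi.const_mul _),
    intervalIntegral.integral_const_mul, intervalIntegral.integral_const, smul_eq_mul,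
    ← sub_eq_integral_of_eq_add_integral hD hψ hu hv] at hmono
  exact hmono

end Primitive

lemma gronwallBound_neg (δ lam ε T : ℝ) :
    gronwallBound δ (-lam) ε T = Real.exp (-lam * T) * δ
      + ε * (if lam = 0 then T else (1 - Real.exp (-lam * T)) / lam) := by
  by_cases hlam : lam = 0
  · simp [hlam, gronwallBound_K0]
  · rw [gronwallBound_of_K_ne_0 (neg_ne_zero.2 hlam), if_neg hlam]
    field_simp
    ring

section EVI

variable {X : Type*} [MetricSpace X] {φ : X → EReal} {lam : ℝ} {ξ : ℝ → X} {x0 : X}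
  {D : X → ℝ → ℝ}

lemma integral_toReal_le_mul_add_cube {s b C : ℝ} (hs : 0 ≤ s)
    (hC : ∀ s' ∈ Icc s b, ∀ t ∈ Icc s b, dist (ξ s') (ξ t) ≤ C * |s' - t|)
    (hfin : ∀ t ∈ Ici (0:ℝ), φ (ξ t) ≠ ⊤)
    (hφcont : ContinuousOn (fun t => (φ (ξ t)).toReal) (Ici 0))
    (hint : ∀ y : X, ∀ s ∈ Ici (0:ℝ), IntervalIntegrable (D y) volume 0 s)
    (hftc : ∀ y : X, ∀ s ∈ Ici (0:ℝ),
      dist (ξ s) y ^ 2 = dist x0 y ^ 2 + ∫ t in (0:ℝ)..s, D y t)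
    (hEVI : ∀ y : X, φ y ≠ ⊤ →
      ∀ᵐ t ∂(volume.restrict (Ioi (0:ℝ))),
        1 / 2 * D y t + lam / 2 * dist (ξ t) y ^ 2 + (φ (ξ t)).toReal ≤ (φ y).toReal)
    {u v : ℝ} (hsu : s ≤ u) (huv : u ≤ v) (hvb : v ≤ b) :
    ∫ t in u..v, (φ (ξ t)).toReal
      ≤ (v - u) * (φ (ξ u)).toReal + |lam| * C ^ 2 / 6 * (v - u) ^ 3 := by
  have hu : 0 ≤ u := hs.trans hsu
  have hevi := evi_integral_le (ψ := fun t => dist (ξ t) (ξ u) ^ 2) (hint (ξ u))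
    (hftc (ξ u)) hφcont (hEVI (ξ u) (hfin u hu)) hu huv
  have hψi : IntervalIntegrable (fun t => dist (ξ t) (ξ u) ^ 2) volume u v :=
    ((continuousOn_Ici_of_eq_add_integral (hint (ξ u)) (hftc (ξ u))).mono
      (by rw [uIcc_of_le huv]; exact fun t ht => hu.trans ht.1)).intervalIntegrable
  have hpt : ∀ t ∈ Icc u v,
      -(|lam| * C ^ 2 / 2) * (t - u) ^ 2 ≤ lam / 2 * dist (ξ t) (ξ u) ^ 2 := by
    intro t ht
    have hd := hC t ⟨hsu.trans ht.1, ht.2.trans hvb⟩ u ⟨hsu, huv.trans hvb⟩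
    have hd2 : dist (ξ t) (ξ u) ^ 2 ≤ C ^ 2 * (t - u) ^ 2 := by
      simpa [mul_pow, sq_abs] using pow_le_pow_left₀ dist_nonneg hd 2
    nlinarith [neg_abs_le lam, abs_nonneg lam, sq_nonneg (dist (ξ t) (ξ u))]
  have hlower : ∫ t in u..v, -(|lam| * C ^ 2 / 2) * (t - u) ^ 2
      ≤ ∫ t in u..v, lam / 2 * dist (ξ t) (ξ u) ^ 2 :=
    intervalIntegral.integral_mono_on huv ((by fun_prop : Continuous _).intervalIntegrable u v)
      (hψi.const_mul (lam / 2)) hpt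
  have hcube : ∫ t in u..v, (t - u) ^ 2 = (v - u) ^ 3 / 3 := by
    norm_num [intervalIntegral.integral_comp_sub_right fun t => t ^ 2]
  rw [intervalIntegral.integral_const_mul, intervalIntegral.integral_const_mul, hcube] at hlower
  rw [dist_self] at hevi
  nlinarith [sq_nonneg (dist (ξ v) (ξ u))]

lemma antitoneOn_toReal_comp_of_evi
    (hlip : ∀ a b : ℝ, 0 < a → a ≤ b → ∃ C : ℝ, ∀ s ∈ Icc a b, ∀ t ∈ Icc a b,
      dist (ξ s) (ξ t) ≤ C * |s - t|)
    (hfin : ∀ t ∈ Ici (0:ℝ), φ (ξ t) ≠ ⊤)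
    (hφcont : ContinuousOn (fun t => (φ (ξ t)).toReal) (Ici 0))
    (hint : ∀ y : X, ∀ s ∈ Ici (0:ℝ), IntervalIntegrable (D y) volume 0 s)
    (hftc : ∀ y : X, ∀ s ∈ Ici (0:ℝ),
      dist (ξ s) y ^ 2 = dist x0 y ^ 2 + ∫ t in (0:ℝ)..s, D y t)
    (hEVI : ∀ y : X, φ y ≠ ⊤ →
      ∀ᵐ t ∂(volume.restrict (Ioi (0:ℝ))),
        1 / 2 * D y t + lam / 2 * dist (ξ t) y ^ 2 + (φ (ξ t)).toReal ≤ (φ y).toReal) :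
    AntitoneOn (fun t => (φ (ξ t)).toReal) (Ici 0) := by
  have hpos : AntitoneOn (fun t => (φ (ξ t)).toReal) (Ioi 0) := by
    intro u hu v _ huv
    obtain ⟨C, hC⟩ := hlip u v hu huv
    exact le_of_integral_le_mul_add_cube huv
      (hφcont.mono fun t ht => mem_Ici.2 (hu.le.trans ht.1))
      fun s t hs hst htv =>
        integral_toReal_le_mul_add_cube hu.le hC hfin hφcont hint hftc hEVI hs hst htv
  rw [← Ioi_insert, ← monotoneOn_toDual_comp_iff]
  exact hpos.dual_right.insert_of_continuousWithinAt (inferInstance : (𝓝[>] (0:ℝ)).NeBot)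
    ((hφcont 0 self_mem_Ici).mono Ioi_subset_Ici_self)

end EVI

theorem stmt14_general {X : Type*} [MetricSpace X]
    (φ : X → EReal)
    (lam : ℝ) (ξ : ℝ → X) (x0 : X) (hξ0 : ξ 0 = x0)
    (hlip : ∀ a b : ℝ, 0 < a → a ≤ b → ∃ C : ℝ, ∀ s ∈ Set.Icc a b, ∀ t ∈ Set.Icc a b,
      dist (ξ s) (ξ t) ≤ C * |s - t|)
    (hfin : ∀ t ∈ Set.Ici (0:ℝ), φ (ξ t) ≠ ⊤)
    (hφcont : ContinuousOn (fun t => (φ (ξ t)).toReal) (Set.Ici 0))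
    (D : X → ℝ → ℝ)
    (hint : ∀ y : X, ∀ s ∈ Set.Ici (0:ℝ), IntervalIntegrable (D y) volume 0 s)
    (hftc : ∀ y : X, ∀ s ∈ Set.Ici (0:ℝ),
      dist (ξ s) y ^ 2 = dist x0 y ^ 2 + ∫ t in (0:ℝ)..s, D y t)
    (hEVI : ∀ y : X, φ y ≠ ⊤ →
      ∀ᵐ t ∂(volume.restrict (Set.Ioi (0:ℝ))),
        1 / 2 * D y t + lam / 2 * dist (ξ t) y ^ 2 + (φ (ξ t)).toReal ≤ (φ y).toReal) :
    ∀ T : ℝ, 0 < T → ∀ y : X, φ y ≠ ⊤ →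
      dist (ξ T) y ^ 2 ≤ Real.exp (-lam * T) * dist x0 y ^ 2
        - 2 * (if lam = 0 then T else (1 - Real.exp (-lam * T)) / lam) *
          ((φ (ξ T)).toReal - (φ y).toReal) := by
  intro T hT y hy
  have hanti := antitoneOn_toReal_comp_of_evi hlip hfin hφcont hint hftc hEVI
  have hψ := continuousOn_Ici_of_eq_add_integral (hint y) (hftc y)
  have hgr := le_gronwallBound_of_ae_le (hint y) (hftc y)
    (G := fun t => -lam * dist (ξ t) y ^ 2 + 2 * ((φ y).toReal - (φ (ξ t)).toReal))
    (K := -lam) (ε := 2 * ((φ y).toReal - (φ (ξ T)).toReal))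
    (by filter_upwards [hEVI y hy] with t ht; linarith)
    ((continuousOn_const.mul hψ).add (continuousOn_const.mul (continuousOn_const.sub hφcont)))
    hT.le fun t ht => by
      linarith [hanti (mem_Ici.2 ht.1) (mem_Ici.2 hT.le) ht.2.le]
  rw [sub_zero, gronwallBound_neg, hξ0] at hgr
  linarith

/-- under the EVI hypothesis, using also that `t ↦ φ(ξ(t))` is non-increasing,
for all `T > 0` and `y ∈ D(φ)`,
`d(ξ(T),y)² ≤ e^{−λT} d(x₀,y)² − 2((1 − e^{−λT})/λ)(φ(ξ(T)) − φ(y))`,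
where `(1 − e^{−λT})/λ` is interpreted as `T` when `λ = 0`. -/
theorem stmt14 {X : Type*} [MetricSpace X] [CompleteSpace X]
    (φ : X → EReal) (hbot : ∀ w, φ w ≠ ⊥) (hlsc : LowerSemicontinuous φ)
    (lam : ℝ) (ξ : ℝ → X) (x0 : X) (hξ0 : ξ 0 = x0) (hx0 : φ x0 ≠ ⊤)
    (hlip : ∀ a b : ℝ, 0 < a → a ≤ b → ∃ C : ℝ, ∀ s ∈ Set.Icc a b, ∀ t ∈ Set.Icc a b,
      dist (ξ s) (ξ t) ≤ C * |s - t|)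
    (hfin : ∀ t ∈ Set.Ici (0:ℝ), φ (ξ t) ≠ ⊤)
    (hφcont : ContinuousOn (fun t => (φ (ξ t)).toReal) (Set.Ici 0))
    (D : X → ℝ → ℝ)
    (hint : ∀ y : X, ∀ s ∈ Set.Ici (0:ℝ), IntervalIntegrable (D y) volume 0 s)
    (hftc : ∀ y : X, ∀ s ∈ Set.Ici (0:ℝ),
      dist (ξ s) y ^ 2 = dist x0 y ^ 2 + ∫ t in (0:ℝ)..s, D y t)
    (hEVI : ∀ y : X, φ y ≠ ⊤ →
      ∀ᵐ t ∂(volume.restrict (Set.Ioi (0:ℝ))),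
        1 / 2 * D y t + lam / 2 * dist (ξ t) y ^ 2 + (φ (ξ t)).toReal ≤ (φ y).toReal) :
    ∀ T : ℝ, 0 < T → ∀ y : X, φ y ≠ ⊤ →
      dist (ξ T) y ^ 2 ≤ Real.exp (-lam * T) * dist x0 y ^ 2
        - 2 * (if lam = 0 then T else (1 - Real.exp (-lam * T)) / lam) *
          ((φ (ξ T)).toReal - (φ y).toReal) :=
  stmt14_general φ lam ξ x0 hξ0 hlip hfin hφcont D hint hftc hEVI
end

section
/- Let φ : X → (-∞,∞] be λ-convex on a geodesic metric space and x₀ ∈ D(φ). Then the local slope |∇φ|(x₀) = 0 if and only if sup_{x ≠ x₀} (φ(x₀) − φ(x))/d(x₀,x)² < ∞. -/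
open Filter ENNReal

/-- The descending local slope `|∇φ|(x) = limsup_{y→x} max{φ(x)−φ(y),0}/d(x,y)`. -/
noncomputable def descSlope {X : Type*} [MetricSpace X] (φ : X → EReal) (x : X) : ℝ≥0∞ :=
  Filter.limsup (fun y => ENNReal.ofReal ((max (φ x - φ y) 0).toReal / dist x y))
    (nhdsWithin x {x}ᶜ)


/-! If the slope at `x₀` vanishes, take `x` and a geodesic `γ` from `x₀` to `x` along which `φ` is
`λ`-convex, and put `d = d(x₀, x)`. Since `d(x₀, γ t) = t d`, convexity gives
`(φ x₀ - φ (γ t)) / d(x₀, γ t) ≥ (φ x₀ - φ x) / d + λ/2 (1 - t) d`; the left side tends to `0`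
as `t → 0⁺`, so `φ x₀ - φ x ≤ -λ/2 d²`. Conversely, a bound `φ x₀ - φ x ≤ C d(x₀, x)²` makes the
difference quotients `O(d(x₀, x))`. -/

open Topology Set

lemma ofReal_toReal_max_sub_div_le_ofReal_iff {a : ℝ} {b : EReal} (hb : b ≠ ⊥) {c d : ℝ}
    (hc : 0 ≤ c) (hd : 0 < d) :
    ENNReal.ofReal ((max ((a : EReal) - b) 0).toReal / d) ≤ ENNReal.ofReal c ↔
      (a : EReal) - b ≤ ((c * d : ℝ) : EReal) := by
  rw [ENNReal.ofReal_le_ofReal_iff hc, div_le_iff₀ hd]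
  induction b using EReal.rec with
  | bot => exact absurd rfl hb
  | top => simp [mul_nonneg hc hd.le]
  | coe b =>
    rw [← EReal.coe_sub, ← EReal.coe_zero, ← EReal.coe_strictMono.monotone.map_max,
      EReal.toReal_coe, EReal.coe_le_coe_iff]
    exact max_le_iff.trans (and_iff_left (by positivity))

section

variable {X : Type*} [MetricSpace X]

theorem descSlope_eq_zero_iff {φ : X → EReal} (hφ : ∀ y, φ y ≠ ⊥) {x : X} (hx : φ x ≠ ⊤) :
    descSlope φ x = 0 ↔
      ∀ ε > 0, ∀ᶠ y in 𝓝[≠] x, φ x - φ y ≤ ((ε * dist x y : ℝ) : EReal) := by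
  have key : ∀ ε > 0, (∀ᶠ y in 𝓝[≠] x,
      ENNReal.ofReal ((max (φ x - φ y) 0).toReal / dist x y) ≤ ENNReal.ofReal ε) ↔
      ∀ᶠ y in 𝓝[≠] x, φ x - φ y ≤ ((ε * dist x y : ℝ) : EReal) := fun ε hε ↦
    eventually_congr <| eventually_nhdsWithin_of_forall fun y hy ↦ by
      rw [← EReal.coe_toReal hx (hφ x)]
      exact ofReal_toReal_max_sub_div_le_ofReal_iff (hφ y) hε.le (dist_pos.2 (Ne.symm hy))
  rw [descSlope, ← nonpos_iff_eq_zero, limsup_le_iff']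
  refine ⟨fun h ε hε ↦ (key ε hε).1 (h _ (ENNReal.ofReal_pos.2 hε)), fun h y hy ↦ ?_⟩
  obtain ⟨r, -, hr, hry⟩ := ENNReal.lt_iff_exists_real_btwn.1 hy
  have hr : 0 < r := ENNReal.ofReal_pos.1 hr
  exact ((key r hr).2 (h r hr)).mono fun _ h ↦ h.trans hry.le

theorem descSlope_eq_zero_of_sub_le_mul_dist_sq {φ : X → EReal} (hφ : ∀ y, φ y ≠ ⊥) {x : X}
    (hx : φ x ≠ ⊤) {C : ℝ} (hC : ∀ y, y ≠ x → φ x - φ y ≤ ((C * dist x y ^ 2 : ℝ) : EReal)) :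
    descSlope φ x = 0 := by
  refine (descSlope_eq_zero_iff hφ hx).2 fun ε hε ↦ ?_
  have hM : 0 < max C 0 + 1 := by positivity
  filter_upwards [self_mem_nhdsWithin,
    nhdsWithin_le_nhds (Metric.ball_mem_nhds x (div_pos hε hM))] with y hy hball
  refine (hC y hy).trans (EReal.coe_le_coe_iff.2 ?_)
  have hyx : dist x y * (max C 0 + 1) < ε := by
    rw [Metric.mem_ball, dist_comm] at hball
    exact (lt_div_iff₀ hM).1 hball
  calc C * dist x y ^ 2 ≤ (max C 0 + 1) * dist x y * dist x y := by
        nlinarith [le_max_left C 0, dist_nonneg (x := x) (y := y)]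
    _ ≤ ε * dist x y := by gcongr; linarith

namespace IsMinGeodesic

variable {γ : ℝ → X}

theorem dist_zero (hγ : IsMinGeodesic γ) {t : ℝ} (ht : t ∈ Icc (0 : ℝ) 1) :
    dist (γ 0) (γ t) = t * dist (γ 0) (γ 1) := by
  rw [hγ 0 (left_mem_Icc.2 zero_le_one) t ht, zero_sub, abs_neg, abs_of_nonneg ht.1]

theorem tendsto_nhdsNE (hγ : IsMinGeodesic γ) (hne : γ 0 ≠ γ 1) :
    Tendsto γ (𝓝[>] 0) (𝓝[≠] (γ 0)) := by
  have hIoc : ∀ᶠ t in 𝓝[>] (0 : ℝ), t ∈ Ioc 0 1 := Ioc_mem_nhdsGT one_pos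
  refine tendsto_nhdsWithin_iff.2 ⟨tendsto_iff_dist_tendsto_zero.2 ?_, ?_⟩
  · have : Tendsto (fun t ↦ t * dist (γ 0) (γ 1)) (𝓝[>] 0) (𝓝 0) := by
      simpa only [zero_mul] using ((continuous_mul_const (dist (γ 0) (γ 1))).tendsto 0).mono_left
        nhdsWithin_le_nhds
    refine this.congr' (hIoc.mono fun t ht ↦ ?_)
    dsimp only
    rw [dist_comm (γ t), hγ.dist_zero (Ioc_subset_Icc_self ht)]
  · filter_upwards [hIoc] with t ht
    rw [mem_compl_singleton_iff, ← dist_pos, dist_comm, hγ.dist_zero (Ioc_subset_Icc_self ht)]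
    exact mul_pos ht.1 (dist_pos.2 hne)

end IsMinGeodesic

def LambdaConvexAlong (lam : ℝ) (φ : X → EReal) (γ : ℝ → X) : Prop :=
  ∀ t ∈ Icc (0 : ℝ) 1,
    φ (γ t) ≤ ((1 - t : ℝ) : EReal) * φ (γ 0) + ((t : ℝ) : EReal) * φ (γ 1)
      - ((lam / 2 * (1 - t) * t * dist (γ 0) (γ 1) ^ 2 : ℝ) : EReal)

theorem IsMinGeodesic.sub_le_of_descSlope_eq_zero {lam : ℝ} {φ : X → EReal} {γ : ℝ → X}
    (hγ : IsMinGeodesic γ) (hne : γ 0 ≠ γ 1) (hφ : ∀ y, φ y ≠ ⊥) (h0 : φ (γ 0) ≠ ⊤)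
    (h1 : φ (γ 1) ≠ ⊤) (hconv : LambdaConvexAlong lam φ γ) (hslope : descSlope φ (γ 0) = 0) :
    φ (γ 0) - φ (γ 1) ≤ ((-(lam / 2) * dist (γ 0) (γ 1) ^ 2 : ℝ) : EReal) := by
  set d := dist (γ 0) (γ 1) with hd_def
  obtain ⟨A, hA⟩ : ∃ A : ℝ, φ (γ 0) = A := ⟨_, (EReal.coe_toReal h0 (hφ _)).symm⟩
  obtain ⟨B, hB⟩ : ∃ B : ℝ, φ (γ 1) = B := ⟨_, (EReal.coe_toReal h1 (hφ _)).symm⟩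
  rw [hA, hB, ← EReal.coe_sub, EReal.coe_le_coe_iff]
  have hsmall : ∀ ε > 0, A - B + lam / 2 * d ^ 2 ≤ ε * d := by
    intro ε hε
    have hev : ∀ᶠ t in 𝓝[>] 0, A - B + lam / 2 * (1 - t) * d ^ 2 ≤ ε * d := by
      filter_upwards [hγ.tendsto_nhdsNE hne ((descSlope_eq_zero_iff hφ h0).1 hslope ε hε),
        Ioc_mem_nhdsGT one_pos] with t hslope_t ht
      have hconv_t := hconv t (Ioc_subset_Icc_self ht)
      rw [hA, hB, ← EReal.coe_mul, ← EReal.coe_mul, ← EReal.coe_add, ← EReal.coe_sub] at hconv_t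
      obtain ⟨P, hP⟩ : ∃ P : ℝ, φ (γ t) = P :=
        ⟨_, (EReal.coe_toReal (ne_top_of_le_ne_top (EReal.coe_ne_top _) hconv_t) (hφ _)).symm⟩
      rw [hP, EReal.coe_le_coe_iff, ← hd_def] at hconv_t
      rw [mem_preimage, mem_ofPred_eq, hA, hP, hγ.dist_zero (Ioc_subset_Icc_self ht),
        ← EReal.coe_sub, EReal.coe_le_coe_iff] at hslope_t
      refine le_of_mul_le_mul_left ?_ ht.1
      nlinarith
    refine le_of_tendsto ?_ hev
    simpa using ((Continuous.tendsto (by fun_prop) 0).mono_left nhdsWithin_le_nhds :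
      Tendsto (fun t : ℝ ↦ A - B + lam / 2 * (1 - t) * d ^ 2) (𝓝[>] 0) _)
  have hlim : Tendsto (fun ε : ℝ ↦ ε * d) (𝓝[>] 0) (𝓝 0) := by
    simpa only [zero_mul] using ((continuous_mul_const d).tendsto 0).mono_left nhdsWithin_le_nhds
  have := ge_of_tendsto hlim (eventually_nhdsWithin_of_forall hsmall)
  linarith

end

theorem stmt15_general {X : Type*} [MetricSpace X] (lam : ℝ)
    (φ : X → EReal) (hbot : ∀ w, φ w ≠ ⊥)
    (hlam : ∀ x y : X, φ x ≠ ⊤ → φ y ≠ ⊤ →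
      ∃ γ : ℝ → X, IsMinGeodesic γ ∧ γ 0 = x ∧ γ 1 = y ∧
        ∀ t ∈ Set.Icc (0:ℝ) 1,
          φ (γ t) ≤ ((1 - t : ℝ) : EReal) * φ x + ((t : ℝ) : EReal) * φ y
            - ((lam / 2 * (1 - t) * t * dist x y ^ 2 : ℝ) : EReal))
    (x₀ : X) (hx₀ : φ x₀ ≠ ⊤) :
    descSlope φ x₀ = 0 ↔
      ∃ C : ℝ, ∀ x : X, x ≠ x₀ → φ x₀ - φ x ≤ ((C * dist x₀ x ^ 2 : ℝ) : EReal) := by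
  refine ⟨fun hslope ↦ ⟨-(lam / 2), fun x hx ↦ ?_⟩,
    fun ⟨C, hC⟩ ↦ descSlope_eq_zero_of_sub_le_mul_dist_sq hbot hx₀ hC⟩
  by_cases hxt : φ x = ⊤
  · simp [hxt]
  obtain ⟨γ, hγ, rfl, rfl, hconv⟩ := hlam x₀ x hx₀ hxt
  exact hγ.sub_le_of_descSlope_eq_zero (Ne.symm hx) hbot hx₀ hxt hconv hslope

/-- for a λ-convex `φ` on a geodesic metric space and `x₀ ∈ D(φ)`,
`|∇φ|(x₀) = 0` iff `sup_{x ≠ x₀} (φ(x₀) − φ(x))/d(x₀,x)² < ∞`. -/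
theorem stmt15 {X : Type*} [MetricSpace X] (lam : ℝ)
    (φ : X → EReal) (hbot : ∀ w, φ w ≠ ⊥)
    (hgeo : ∀ x y : X, ∃ γ : ℝ → X, IsMinGeodesic γ ∧ γ 0 = x ∧ γ 1 = y)
    (hlam : ∀ x y : X, φ x ≠ ⊤ → φ y ≠ ⊤ →
      ∃ γ : ℝ → X, IsMinGeodesic γ ∧ γ 0 = x ∧ γ 1 = y ∧
        ∀ t ∈ Set.Icc (0:ℝ) 1,
          φ (γ t) ≤ ((1 - t : ℝ) : EReal) * φ x + ((t : ℝ) : EReal) * φ y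
            - ((lam / 2 * (1 - t) * t * dist x y ^ 2 : ℝ) : EReal))
    (x₀ : X) (hx₀ : φ x₀ ≠ ⊤) :
    descSlope φ x₀ = 0 ↔
      ∃ C : ℝ, ∀ x : X, x ≠ x₀ → φ x₀ - φ x ≤ ((C * dist x₀ x ^ 2 : ℝ) : EReal) :=
  stmt15_general lam φ hbot hlam x₀ hx₀
end

section
/- Trotter–Kato step estimate: in a metric space with K-convex squared distance and commutativity, let φ₁ be λ₁-convex, φ₂ be λ₂-convex, φ = φ₁ + φ₂, and suppose ẑ minimizes w ↦ φ₁(w) + d(z,w)²/(2τ) and z' minimizes w ↦ φ₂(w) + d(ẑ,w)²/(2τ). Then for all w ∈ D(φ): (1 + λ₂τ) d(z',w)² ≤ d(z,w)² − λ₁τ d(ẑ,w)² + 2τ(φ(w) − φ₁(ẑ) − φ₂(z')) − min{0,K}·τ(φ₁(z) − φ₁(ẑ) + φ₂(ẑ) − φ₂(z')). -/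
/-!
Each Moreau–Yosida step satisfies the discrete EVI
`(1 + λτ) d(x_τ,y)² ≤ d(x,y)² + 2τ(φ(y) − φ(x_τ)) − (K/2) d(x,x_τ)²`:
by commutativity, the first variation at `x_τ` of `d(·,y)²` along the geodesic towards `x`
equals that of `d(·,x)²` along the geodesic towards `y`; `K`-convexity of `d²` bounds the first
from above, and minimality of `x_τ` together with `λ`-convexity of `φ` bounds the second from
below. Adding the estimates for the two steps, with `K` lowered to `min{0,K}` so that its
coefficient has the right sign, the leftover terms `d(z,ẑ)²` and `d(ẑ,z')²` are paid for by
`2τ` times the energy drops `φ₁(z) − φ₁(ẑ)` and `φ₂(ẑ) − φ₂(z')`, which minimality also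
provides.
-/

open Set Filter Topology

theorem le_of_tendsto_of_forall_Ioc_le {f g : ℝ → ℝ} {L : ℝ}
    (hg : ContinuousWithinAt g (Ioi 0) 0) (hf : Tendsto f (𝓝[>] 0) (𝓝 L))
    (h : ∀ u ∈ Ioc (0:ℝ) 1, g u ≤ f u) : g 0 ≤ L :=
  le_of_tendsto_of_tendsto hg hf (eventually_of_mem (Ioc_mem_nhdsGT one_pos) h)

theorem ge_of_tendsto_of_forall_Ioc_le {f g : ℝ → ℝ} {L : ℝ}
    (hg : ContinuousWithinAt g (Ioi 0) 0) (hf : Tendsto f (𝓝[>] 0) (𝓝 L))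
    (h : ∀ u ∈ Ioc (0:ℝ) 1, f u ≤ g u) : L ≤ g 0 :=
  le_of_tendsto_of_tendsto hf hg (eventually_of_mem (Ioc_mem_nhdsGT one_pos) h)

section

variable {X : Type*} [MetricSpace X]

variable (X) in
def SqDistSemiconvex (K : ℝ) : Prop :=
  ∀ (y : X) (γ : ℝ → X), IsMinGeodesic γ → ∀ t ∈ Set.Icc (0:ℝ) 1,
    dist y (γ t) ^ 2 ≤ (1 - t) * dist y (γ 0) ^ 2 + t * dist y (γ 1) ^ 2
      - K / 2 * (1 - t) * t * dist (γ 0) (γ 1) ^ 2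

variable (X) in
/-- The first variations at a common starting point of `d(·, η 1)²` along `γ` and of
`d(·, γ 1)²` along `η` exist and agree. -/
def SqDistCommutativity : Prop :=
  ∀ γ η : ℝ → X, IsMinGeodesic γ → IsMinGeodesic η → γ 0 = η 0 →
    ∃ L : ℝ,
      Filter.Tendsto (fun s => (dist (γ s) (η 1) ^ 2 - dist (γ 0) (η 1) ^ 2) / s)
        (nhdsWithin 0 (Set.Ioi 0)) (nhds L) ∧
      Filter.Tendsto (fun u => (dist (η u) (γ 1) ^ 2 - dist (η 0) (γ 1) ^ 2) / u)
        (nhdsWithin 0 (Set.Ioi 0)) (nhds L)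

def GeodesicallySemiconvex (lam : ℝ) (φ : X → EReal) : Prop :=
  ∀ γ : ℝ → X, IsMinGeodesic γ → ∀ t ∈ Set.Icc (0:ℝ) 1,
    φ (γ t) ≤ ((1 - t : ℝ) : EReal) * φ (γ 0) + ((t : ℝ) : EReal) * φ (γ 1)
      - ((lam / 2 * (1 - t) * t * dist (γ 0) (γ 1) ^ 2 : ℝ) : EReal)

def IsProximalPoint (φ : X → EReal) (τ : ℝ) (x xτ : X) : Prop :=
  ∀ w, φ xτ + ((dist x xτ ^ 2 / (2 * τ) : ℝ) : EReal)
    ≤ φ w + ((dist x w ^ 2 / (2 * τ) : ℝ) : EReal)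

theorem SqDistSemiconvex.mono {K K' : ℝ} (hK : SqDistSemiconvex X K) (h : K' ≤ K) :
    SqDistSemiconvex X K' := by
  intro y γ hγ t ht
  refine (hK y γ hγ t ht).trans ?_
  have h1t : 0 ≤ 1 - t := sub_nonneg.2 ht.2
  have : 0 ≤ (1 - t) * t * dist (γ 0) (γ 1) ^ 2 := by have := ht.1; positivity
  nlinarith

theorem SqDistSemiconvex.sq_dist_sub_div_le {K : ℝ} (hK : SqDistSemiconvex X K)
    {γ : ℝ → X} (hγ : IsMinGeodesic γ) (y : X) {s : ℝ} (hs : s ∈ Ioc (0:ℝ) 1) :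
    (dist (γ s) y ^ 2 - dist (γ 0) y ^ 2) / s
      ≤ dist (γ 1) y ^ 2 - dist (γ 0) y ^ 2 - K / 2 * (1 - s) * dist (γ 0) (γ 1) ^ 2 := by
  have h := hK y γ hγ s (Ioc_subset_Icc_self hs)
  rw [div_le_iff₀ hs.1]
  simp only [dist_comm y] at h
  nlinarith

theorem IsProximalPoint.ne_top {φ : X → EReal} {τ : ℝ} {x xτ w : X}
    (h : IsProximalPoint φ τ x xτ) (hw : φ w ≠ ⊤) : φ xτ ≠ ⊤ :=
  (EReal.add_ne_top_iff_ne_top_left (EReal.coe_ne_bot _) (EReal.coe_ne_top _)).1 <|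
    ne_top_of_le_ne_top (EReal.add_ne_top hw (EReal.coe_ne_top _)) (h w)

theorem IsProximalPoint.sq_dist_div_le_sub {φ : X → EReal} {τ : ℝ} {x xτ : X} {a : ℝ}
    (h : IsProximalPoint φ τ x xτ) (ha : φ xτ = a) :
    ((dist x xτ ^ 2 / (2 * τ) : ℝ) : EReal) ≤ φ x - φ xτ := by
  rw [ha, EReal.le_sub_iff_add_le (.inl (EReal.coe_ne_bot a)) (.inl (EReal.coe_ne_top a)),
    add_comm, ← ha]
  simpa using h x

theorem IsProximalPoint.le_sq_dist_sub_div {φ : X → EReal} {lam τ a b : ℝ} {x : X}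
    {η : ℝ → X} (hprox : IsProximalPoint φ τ x (η 0)) (hτ : 0 < τ)
    (hφ : GeodesicallySemiconvex lam φ) (hη : IsMinGeodesic η)
    (ha : φ (η 0) = a) (hb : φ (η 1) = b) {u : ℝ} (hu : u ∈ Ioc (0:ℝ) 1) :
    2 * τ * (a - b) + lam * τ * (1 - u) * dist (η 0) (η 1) ^ 2
      ≤ (dist (η u) x ^ 2 - dist (η 0) x ^ 2) / u := by
  have hconv := hφ η hη u (Ioc_subset_Icc_self hu)
  rw [ha, hb] at hconv
  have hmin : a + dist x (η 0) ^ 2 / (2 * τ)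
      ≤ (1 - u) * a + u * b - lam / 2 * (1 - u) * u * dist (η 0) (η 1) ^ 2
        + dist x (η u) ^ 2 / (2 * τ) := by
    have := (hprox (η u)).trans (add_le_add_left hconv _)
    rw [ha] at this
    exact_mod_cast this
  have hmin' := mul_le_mul_of_nonneg_left hmin (by positivity : (0:ℝ) ≤ 2 * τ)
  rw [mul_add, mul_add, mul_div_cancel₀ _ (by positivity), mul_div_cancel₀ _ (by positivity)]
    at hmin'
  rw [le_div_iff₀ hu.1, dist_comm (η u), dist_comm (η 0) x]
  nlinarith

theorem IsProximalPoint.discrete_evi {φ : X → EReal} {K lam τ a b : ℝ} {x xτ y : X}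
    (hprox : IsProximalPoint φ τ x xτ) (hτ : 0 < τ)
    (hgeo : ∀ x y : X, ∃ γ : ℝ → X, IsMinGeodesic γ ∧ γ 0 = x ∧ γ 1 = y)
    (hcomm : SqDistCommutativity X) (hK : SqDistSemiconvex X K)
    (hφ : GeodesicallySemiconvex lam φ) (ha : φ xτ = a) (hb : φ y = b) :
    (1 + lam * τ) * dist xτ y ^ 2
      ≤ dist x y ^ 2 + 2 * τ * (b - a) - K / 2 * dist x xτ ^ 2 := by
  obtain ⟨η, hη, rfl, rfl⟩ := hgeo xτ y
  obtain ⟨γ, hγ, hγ0, rfl⟩ := hgeo (η 0) x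
  obtain ⟨L, hLγ, hLη⟩ := hcomm γ η hγ hη hγ0
  have hlow := le_of_tendsto_of_forall_Ioc_le (by fun_prop) hLη
    fun u hu => hprox.le_sq_dist_sub_div hτ hφ hη ha hb hu
  have hhigh := ge_of_tendsto_of_forall_Ioc_le (by fun_prop) hLγ
    fun s hs => hK.sq_dist_sub_div_le hγ (η 1) hs
  simp only [hγ0, sub_zero, mul_one] at hlow hhigh
  simp only [dist_comm (γ 1)] at hhigh ⊢
  linarith

end

theorem stmt18_general {X : Type*} [MetricSpace X] (K lam₁ lam₂ τ : ℝ) (hτ : 0 < τ)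
    (φ₁ φ₂ : X → EReal) (hbot₁ : ∀ w, φ₁ w ≠ ⊥) (hbot₂ : ∀ w, φ₂ w ≠ ⊥)
    (hgeo : ∀ x y : X, ∃ γ : ℝ → X, IsMinGeodesic γ ∧ γ 0 = x ∧ γ 1 = y)
    (hcomm : ∀ γ η : ℝ → X, IsMinGeodesic γ → IsMinGeodesic η → γ 0 = η 0 →
      ∃ L : ℝ,
        Filter.Tendsto (fun s => (dist (γ s) (η 1) ^ 2 - dist (γ 0) (η 1) ^ 2) / s)
          (nhdsWithin 0 (Set.Ioi 0)) (nhds L) ∧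
        Filter.Tendsto (fun u => (dist (η u) (γ 1) ^ 2 - dist (η 0) (γ 1) ^ 2) / u)
          (nhdsWithin 0 (Set.Ioi 0)) (nhds L))
    (hK : ∀ (y : X) (γ : ℝ → X), IsMinGeodesic γ → ∀ t ∈ Set.Icc (0:ℝ) 1,
      dist y (γ t) ^ 2 ≤ (1 - t) * dist y (γ 0) ^ 2 + t * dist y (γ 1) ^ 2
        - K / 2 * (1 - t) * t * dist (γ 0) (γ 1) ^ 2)
    (hlam₁ : ∀ γ : ℝ → X, IsMinGeodesic γ → ∀ t ∈ Set.Icc (0:ℝ) 1,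
      φ₁ (γ t) ≤ ((1 - t : ℝ) : EReal) * φ₁ (γ 0) + ((t : ℝ) : EReal) * φ₁ (γ 1)
        - ((lam₁ / 2 * (1 - t) * t * dist (γ 0) (γ 1) ^ 2 : ℝ) : EReal))
    (hlam₂ : ∀ γ : ℝ → X, IsMinGeodesic γ → ∀ t ∈ Set.Icc (0:ℝ) 1,
      φ₂ (γ t) ≤ ((1 - t : ℝ) : EReal) * φ₂ (γ 0) + ((t : ℝ) : EReal) * φ₂ (γ 1)
        - ((lam₂ / 2 * (1 - t) * t * dist (γ 0) (γ 1) ^ 2 : ℝ) : EReal))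
    (z zhat z' : X)
    (hmin₁ : ∀ w, φ₁ zhat + ((dist z zhat ^ 2 / (2 * τ) : ℝ) : EReal)
      ≤ φ₁ w + ((dist z w ^ 2 / (2 * τ) : ℝ) : EReal))
    (hmin₂ : ∀ w, φ₂ z' + ((dist zhat z' ^ 2 / (2 * τ) : ℝ) : EReal)
      ≤ φ₂ w + ((dist zhat w ^ 2 / (2 * τ) : ℝ) : EReal)) :
    ∀ w : X, φ₁ w ≠ ⊤ → φ₂ w ≠ ⊤ →
      (((1 + lam₂ * τ) * dist z' w ^ 2 : ℝ) : EReal)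
        ≤ ((dist z w ^ 2 - lam₁ * τ * dist zhat w ^ 2 : ℝ) : EReal)
          + ((2 * τ : ℝ) : EReal) * ((φ₁ w + φ₂ w) - φ₁ zhat - φ₂ z')
          - ((min 0 K * τ : ℝ) : EReal) * ((φ₁ z - φ₁ zhat) + (φ₂ zhat - φ₂ z')) := by
  intro w hw₁ hw₂
  have hprox₁ : IsProximalPoint φ₁ τ z zhat := hmin₁
  have hprox₂ : IsProximalPoint φ₂ τ zhat z' := hmin₂
  have hzhat₁ := EReal.coe_toReal (hprox₁.ne_top hw₁) (hbot₁ zhat)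
  have hz'₂ := EReal.coe_toReal (hprox₂.ne_top hw₂) (hbot₂ z')
  have hw₁' := EReal.coe_toReal hw₁ (hbot₁ w)
  have hw₂' := EReal.coe_toReal hw₂ (hbot₂ w)
  have hK' : SqDistSemiconvex X (min 0 K) := SqDistSemiconvex.mono hK (min_le_right 0 K)
  have evi₁ := hprox₁.discrete_evi hτ hgeo hcomm hK' hlam₁ hzhat₁.symm hw₁'.symm
  have evi₂ := hprox₂.discrete_evi hτ hgeo hcomm hK' hlam₂ hz'₂.symm hw₂'.symm
  have drop : (((dist z zhat ^ 2 + dist zhat z' ^ 2) / (2 * τ) : ℝ) : EReal)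
      ≤ (φ₁ z - φ₁ zhat) + (φ₂ zhat - φ₂ z') := by
    rw [add_div, EReal.coe_add]
    exact add_le_add (hprox₁.sq_dist_div_le_sub hzhat₁.symm) (hprox₂.sq_dist_div_le_sub hz'₂.symm)
  have hcoef : min 0 K * τ * ((dist z zhat ^ 2 + dist zhat z' ^ 2) / (2 * τ))
      = min 0 K / 2 * (dist z zhat ^ 2 + dist zhat z' ^ 2) := by
    field_simp
  calc (((1 + lam₂ * τ) * dist z' w ^ 2 : ℝ) : EReal)
      ≤ ((dist z w ^ 2 - lam₁ * τ * dist zhat w ^ 2 : ℝ) : EReal)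
          + ((2 * τ : ℝ) : EReal) * ((φ₁ w + φ₂ w) - φ₁ zhat - φ₂ z')
          - ((min 0 K * τ : ℝ) : EReal)
            * (((dist z zhat ^ 2 + dist zhat z' ^ 2) / (2 * τ) : ℝ) : EReal) := by
        rw [← hw₁', ← hw₂', ← hzhat₁, ← hz'₂]
        norm_cast
        linarith
    _ ≤ _ := by
        refine EReal.sub_le_sub le_rfl ?_
        rw [mul_comm, mul_comm ((min 0 K * τ : ℝ) : EReal)]
        exact EReal.mul_le_mul_of_nonpos_right drop
          (EReal.coe_nonpos.2 (mul_nonpos_of_nonpos_of_nonneg (min_le_left 0 K) hτ.le))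

/-- Trotter–Kato step estimate: in a metric space with `K`-convex squared
distance and commutativity, if `zhat` is a Moreau–Yosida minimizer of the λ₁-convex `φ₁` from `z`
and `z'` is one of the λ₂-convex `φ₂` from `zhat` (both with step `τ`), then for all
`w ∈ D(φ₁ + φ₂)`:
`(1 + λ₂τ) d(z',w)² ≤ d(z,w)² − λ₁τ d(zhat,w)² + 2τ(φ(w) − φ₁(zhat) − φ₂(z'))
  − min{0,K}·τ·(φ₁(z) − φ₁(zhat) + φ₂(zhat) − φ₂(z'))`. -/
theorem stmt18 {X : Type*} [MetricSpace X] (K lam₁ lam₂ τ : ℝ) (hτ : 0 < τ)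
    (φ₁ φ₂ : X → EReal) (hbot₁ : ∀ w, φ₁ w ≠ ⊥) (hbot₂ : ∀ w, φ₂ w ≠ ⊥)
    (hgeo : ∀ x y : X, ∃ γ : ℝ → X, IsMinGeodesic γ ∧ γ 0 = x ∧ γ 1 = y)
    (hcomm : ∀ γ η : ℝ → X, IsMinGeodesic γ → IsMinGeodesic η → γ 0 = η 0 →
      ∃ L : ℝ,
        Filter.Tendsto (fun s => (dist (γ s) (η 1) ^ 2 - dist (γ 0) (η 1) ^ 2) / s)
          (nhdsWithin 0 (Set.Ioi 0)) (nhds L) ∧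
        Filter.Tendsto (fun u => (dist (η u) (γ 1) ^ 2 - dist (η 0) (γ 1) ^ 2) / u)
          (nhdsWithin 0 (Set.Ioi 0)) (nhds L))
    (hK : ∀ (y : X) (γ : ℝ → X), IsMinGeodesic γ → ∀ t ∈ Set.Icc (0:ℝ) 1,
      dist y (γ t) ^ 2 ≤ (1 - t) * dist y (γ 0) ^ 2 + t * dist y (γ 1) ^ 2
        - K / 2 * (1 - t) * t * dist (γ 0) (γ 1) ^ 2)
    (hlam₁ : ∀ γ : ℝ → X, IsMinGeodesic γ → ∀ t ∈ Set.Icc (0:ℝ) 1,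
      φ₁ (γ t) ≤ ((1 - t : ℝ) : EReal) * φ₁ (γ 0) + ((t : ℝ) : EReal) * φ₁ (γ 1)
        - ((lam₁ / 2 * (1 - t) * t * dist (γ 0) (γ 1) ^ 2 : ℝ) : EReal))
    (hlam₂ : ∀ γ : ℝ → X, IsMinGeodesic γ → ∀ t ∈ Set.Icc (0:ℝ) 1,
      φ₂ (γ t) ≤ ((1 - t : ℝ) : EReal) * φ₂ (γ 0) + ((t : ℝ) : EReal) * φ₂ (γ 1)
        - ((lam₂ / 2 * (1 - t) * t * dist (γ 0) (γ 1) ^ 2 : ℝ) : EReal))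
    (z zhat z' : X) (hz₁ : φ₁ z ≠ ⊤) (hz₂ : φ₂ z ≠ ⊤)
    (hmin₁ : ∀ w, φ₁ zhat + ((dist z zhat ^ 2 / (2 * τ) : ℝ) : EReal)
      ≤ φ₁ w + ((dist z w ^ 2 / (2 * τ) : ℝ) : EReal))
    (hmin₂ : ∀ w, φ₂ z' + ((dist zhat z' ^ 2 / (2 * τ) : ℝ) : EReal)
      ≤ φ₂ w + ((dist zhat w ^ 2 / (2 * τ) : ℝ) : EReal)) :
    ∀ w : X, φ₁ w ≠ ⊤ → φ₂ w ≠ ⊤ →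
      (((1 + lam₂ * τ) * dist z' w ^ 2 : ℝ) : EReal)
        ≤ ((dist z w ^ 2 - lam₁ * τ * dist zhat w ^ 2 : ℝ) : EReal)
          + ((2 * τ : ℝ) : EReal) * ((φ₁ w + φ₂ w) - φ₁ zhat - φ₂ z')
          - ((min 0 K * τ : ℝ) : EReal) * ((φ₁ z - φ₁ zhat) + (φ₂ zhat - φ₂ z')) :=
  stmt18_general K lam₁ lam₂ τ hτ φ₁ φ₂ hbot₁ hbot₂ hgeo hcomm hK hlam₁ hlam₂ z zhat z' hmin₁ hmin₂
end
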